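/- arXiv:2406.07795 — 13 statements merged into one kernel-verified Lean document; each statement's English description precedes it below -/
import Mathlib

section
/- Let n be a positive integer and let W(A_n) be the walk matrix of the Dynkin graph A_n. Then the Smith normal form of W(A_n) is diag(1,...,1,0,...,0) with exactly ⌈n/2⌉ ones; equivalently, there exist matrices U, V in GL_n(ℤ) such that U·W(A_n)·V is the diagonal n×n matrix whose first ⌈n/2⌉ diagonal entries equal 1 and whose remaining diagonal entries equal 0. -/
open Matrix

/-- The adjacency matrix of the Dynkin graph (path graph) `A_n`:
`A i j = 1` if `|i - j| = 1` and `0` otherwise (0-indexed). -/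
def pathAdj (n : ℕ) : Matrix (Fin n) (Fin n) ℤ :=
  Matrix.of fun i j => if (i : ℕ) + 1 = (j : ℕ) ∨ (j : ℕ) + 1 = (i : ℕ) then 1 else 0

/-- The walk matrix of a square matrix `M`: its `j`-th column (0-indexed)
is `M ^ j` applied to the all-ones vector. -/
def walkMatrix {m : ℕ} {R : Type*} [CommRing R] (M : Matrix (Fin m) (Fin m) R) :
    Matrix (Fin m) (Fin m) R :=
  Matrix.of fun i j => (M ^ (j : ℕ) *ᵥ fun _ => (1 : R)) i

set_option maxHeartbeats 1000000

namespace SNFPath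

variable {n : ℕ}

def ext (v : Fin n → ℤ) : ℕ → ℤ := fun k => if h : k < n then v ⟨k, h⟩ else 0

lemma ext_apply (v : Fin n → ℤ) (i : Fin n) : ext v (i : ℕ) = v i := by
  simp [ext, i.isLt]

lemma ext_lt (v : Fin n → ℤ) {k : ℕ} (h : k < n) : ext v k = v ⟨k, h⟩ := by
  simp [ext, h]

lemma ext_ge (v : Fin n → ℤ) {k : ℕ} (h : n ≤ k) : ext v k = 0 := by
  simp [ext, Nat.not_lt.2 h]

lemma sum_delta_nat (c : ℕ) (f : Fin n → ℤ) :
    (∑ k : Fin n, if (k : ℕ) = c then f k else 0) = ext f c := by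
  by_cases h : c < n
  · have base : (∑ k : Fin n, if k = (⟨c, h⟩ : Fin n) then f k else 0) = f ⟨c, h⟩ := by simp
    rw [ext_lt f h, ← base]
    refine Finset.sum_congr rfl fun k _ => ?_
    congr 1
    simp [Fin.ext_iff]
  · rw [ext_ge f (Nat.not_lt.1 h)]
    refine Finset.sum_eq_zero fun k _ => ?_
    rw [if_neg]
    have := k.isLt
    omega

/-- the folding matrix -/
def Pm (n : ℕ) : Matrix (Fin n) (Fin n) ℤ :=
  Matrix.of fun i j =>
    if (i : ℕ) = (j : ℕ) then 1
    else if (i : ℕ) + (j : ℕ) = n - 1 ∧ (j : ℕ) < (i : ℕ) then 1 else 0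

/-- the compressed tridiagonal-like matrix -/
def Tm (n : ℕ) : Matrix (Fin n) (Fin n) ℤ :=
  Matrix.of fun i j =>
    if (i : ℕ) < (n+1)/2 ∧ (j : ℕ) < (n+1)/2 then
      (if (i : ℕ) + 1 = (j : ℕ) ∨ (j : ℕ) + 1 = (i : ℕ) then 1 else 0)
      + (if (j : ℕ) + 1 = (i : ℕ) ∧ (i : ℕ) + 1 = (n+1)/2 ∧ n % 2 = 1 then 1 else 0)
      + (if (i : ℕ) = (j : ℕ) ∧ (i : ℕ) + 1 = (n+1)/2 ∧ n % 2 = 0 then 1 else 0)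
    else 0

def uv (n : ℕ) : Fin n → ℤ := fun i => if (i : ℕ) < (n+1)/2 then 1 else 0

def d0 (n : ℕ) : Fin n → ℤ := fun i => if (i : ℕ) = 0 then 1 else 0

lemma pathAdj_mulVec (v : Fin n → ℤ) (i : Fin n) :
    (pathAdj n *ᵥ v) i =
      ext v ((i : ℕ) + 1) + (if 0 < (i : ℕ) then ext v ((i : ℕ) - 1) else 0) := by
  unfold pathAdj Matrix.mulVec dotProduct
  have h1 : ∀ k : Fin n,
      (Matrix.of fun i j : Fin n =>
          if (i : ℕ) + 1 = (j : ℕ) ∨ (j : ℕ) + 1 = (i : ℕ) then (1:ℤ) else 0) i k * v k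
        = (if (k:ℕ) = (i:ℕ)+1 then v k else 0)
          + (if 0 < (i:ℕ) then (if (k:ℕ) = (i:ℕ)-1 then v k else 0) else 0) := by
    intro k
    simp only [Matrix.of_apply]
    split_ifs <;> first | ring1 | omega
  rw [Finset.sum_congr rfl fun k _ => h1 k, Finset.sum_add_distrib, sum_delta_nat]
  congr 1
  split_ifs with h
  · rw [sum_delta_nat]
  · exact Finset.sum_const_zero

lemma Pm_mulVec (v : Fin n → ℤ) (i : Fin n) :
    (Pm n *ᵥ v) i =
      v i + (if n - 1 - (i : ℕ) < (i : ℕ) then ext v (n - 1 - (i : ℕ)) else 0) := by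
  unfold Pm Matrix.mulVec dotProduct
  have h1 : ∀ k : Fin n,
      (Matrix.of fun i j : Fin n =>
          if (i : ℕ) = (j : ℕ) then (1:ℤ)
          else if (i : ℕ) + (j : ℕ) = n - 1 ∧ (j : ℕ) < (i : ℕ) then 1 else 0) i k * v k
        = (if (k:ℕ) = (i:ℕ) then v k else 0)
          + (if n - 1 - (i:ℕ) < (i:ℕ) then
              (if (k:ℕ) = n - 1 - (i:ℕ) then v k else 0) else 0) := by
    intro k
    have hk := k.isLt
    have hi := i.isLt
    simp only [Matrix.of_apply]
    split_ifs <;> first | ring1 | omega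
  rw [Finset.sum_congr rfl fun k _ => h1 k, Finset.sum_add_distrib, sum_delta_nat]
  rw [ext_apply]
  congr 1
  split_ifs with h
  · rw [sum_delta_nat]
  · exact Finset.sum_const_zero

lemma Tm_mulVec (v : Fin n → ℤ) (i : Fin n) :
    (Tm n *ᵥ v) i =
      if (i : ℕ) < (n+1)/2 then
        (if (i : ℕ) + 1 < (n+1)/2 then ext v ((i:ℕ)+1) else 0)
        + (if 0 < (i : ℕ) then ext v ((i:ℕ)-1) else 0)
        + (if (i : ℕ) + 1 = (n+1)/2 ∧ n % 2 = 1 ∧ 0 < (i : ℕ) then ext v ((i:ℕ)-1) else 0)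
        + (if (i : ℕ) + 1 = (n+1)/2 ∧ n % 2 = 0 then ext v (i:ℕ) else 0)
      else 0 := by
  unfold Tm Matrix.mulVec dotProduct
  have h1 : ∀ k : Fin n,
      (Matrix.of fun i j : Fin n =>
        if (i : ℕ) < (n+1)/2 ∧ (j : ℕ) < (n+1)/2 then
          (if (i : ℕ) + 1 = (j : ℕ) ∨ (j : ℕ) + 1 = (i : ℕ) then (1:ℤ) else 0)
          + (if (j : ℕ) + 1 = (i : ℕ) ∧ (i : ℕ) + 1 = (n+1)/2 ∧ n % 2 = 1 then 1 else 0)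
          + (if (i : ℕ) = (j : ℕ) ∧ (i : ℕ) + 1 = (n+1)/2 ∧ n % 2 = 0 then 1 else 0)
        else 0) i k * v k
      = (if (i : ℕ) < (n+1)/2 then
          (if (i : ℕ) + 1 < (n+1)/2 then (if (k:ℕ) = (i:ℕ)+1 then v k else 0) else 0)
          + (if 0 < (i : ℕ) then (if (k:ℕ) = (i:ℕ)-1 then v k else 0) else 0)
          + (if (i : ℕ) + 1 = (n+1)/2 ∧ n % 2 = 1 ∧ 0 < (i : ℕ) then
              (if (k:ℕ) = (i:ℕ)-1 then v k else 0) else 0)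
          + (if (i : ℕ) + 1 = (n+1)/2 ∧ n % 2 = 0 then (if (k:ℕ) = (i:ℕ) then v k else 0) else 0)
        else 0) := by
    intro k
    have hk := k.isLt
    have hi := i.isLt
    simp only [Matrix.of_apply]
    by_cases him : (i : ℕ) < (n+1)/2
    · by_cases hkm : (k : ℕ) < (n+1)/2
      · rw [if_pos (⟨him, hkm⟩ : (i : ℕ) < (n+1)/2 ∧ (k : ℕ) < (n+1)/2), if_pos him]
        split_ifs <;> first | ring1 | omega
      · rw [if_neg (fun hc => hkm hc.2), if_pos him, zero_mul]
        split_ifs <;> first | ring1 | omega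
    · rw [if_neg (fun hc => him hc.1), if_neg him, zero_mul]
  rw [Finset.sum_congr rfl fun k _ => h1 k]
  split_ifs <;>
    simp only [Finset.sum_add_distrib, Finset.sum_const_zero, sum_delta_nat, ext_apply]

def Supported (v : Fin n → ℤ) : Prop := ∀ i : Fin n, (n+1)/2 ≤ (i : ℕ) → v i = 0

lemma ext_supported {v : Fin n → ℤ} (hv : Supported v) {k : ℕ} (hk : (n+1)/2 ≤ k) :
    ext v k = 0 := by
  unfold ext
  split_ifs with h
  · exact hv _ hk
  · rfl

lemma Tm_supported (v : Fin n → ℤ) : Supported (Tm n *ᵥ v) := fun i hi => by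
  rw [Tm_mulVec, if_neg (by omega)]

lemma Pm_mulVec_fold {v : Fin n → ℤ} (hv : Supported v) (i : Fin n) :
    (Pm n *ᵥ v) i =
      if (i : ℕ) < (n+1)/2 then ext v (i : ℕ) else ext v (n - 1 - (i : ℕ)) := by
  have hi := i.isLt
  rw [Pm_mulVec]
  by_cases him : (i : ℕ) < (n+1)/2
  · rw [if_pos him, if_neg (by omega), ext_apply, add_zero]
  · rw [if_neg him, if_pos (by omega), hv i (by omega), zero_add]

lemma fold_symm {v : Fin n → ℤ} (hv : Supported v) (i : Fin n) :
    (Pm n *ᵥ v) i = ext (Pm n *ᵥ v) (n - 1 - (i : ℕ)) := by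
  have hi := i.isLt
  rw [ext_lt (Pm n *ᵥ v) (show n - 1 - (i:ℕ) < n by omega),
    Pm_mulVec_fold hv ⟨n - 1 - (i:ℕ), by omega⟩, Pm_mulVec_fold hv i]
  simp only [Fin.val_mk]
  by_cases him : (i : ℕ) < (n+1)/2
  · rw [if_pos him]
    by_cases h2 : n - 1 - (i:ℕ) < (n+1)/2
    · rw [if_pos h2]
      congr 1
      omega
    · rw [if_neg h2]
      congr 1
      omega
  · rw [if_neg him, if_pos (by omega)]

lemma A_symm {w : Fin n → ℤ} (hw : ∀ i : Fin n, w i = ext w (n - 1 - (i : ℕ)))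
    (i : Fin n) : (pathAdj n *ᵥ w) i = ext (pathAdj n *ᵥ w) (n - 1 - (i : ℕ)) := by
  have hi := i.isLt
  have hwe : ∀ a : ℕ, a < n → ext w a = ext w (n - 1 - a) := fun a ha => by
    rw [ext_lt w ha]
    exact hw ⟨a, ha⟩
  rw [pathAdj_mulVec, ext_lt _ (show n - 1 - (i:ℕ) < n by omega), pathAdj_mulVec]
  show ext w ((i:ℕ)+1) + _ = ext w ((n-1-(i:ℕ))+1) + _
  set a := (i : ℕ) with ha
  by_cases h1 : a + 1 < n
  · by_cases h2 : 0 < a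
    · rw [hwe (a+1) h1, if_pos h2, if_pos (show 0 < n-1-a by omega), hwe (a-1) (by omega),
        show n-1-(a+1) = n-1-a-1 from by omega, show n-1-(a-1) = n-1-a+1 from by omega]
      ring
    · rw [if_neg h2, if_pos (show 0 < n-1-a by omega), hwe (a+1) h1,
        ext_ge w (show n ≤ n-1-a+1 by omega),
        show n-1-(a+1) = n-1-a-1 from by omega]
      ring
  · by_cases h2 : 0 < a
    · rw [ext_ge w (show n ≤ a+1 by omega), if_pos h2, if_neg (show ¬ 0 < n-1-a by omega),
        hwe (a-1) (by omega), show n-1-(a-1) = n-1-a+1 from by omega]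
      ring
    · rw [if_neg h2, if_neg (show ¬ 0 < n-1-a by omega), add_zero, add_zero]
      congr 1
      omega

lemma key_lt {v : Fin n → ℤ} (hv : Supported v) (i : Fin n)
    (him : (i : ℕ) < (n+1)/2) :
    (pathAdj n *ᵥ (Pm n *ᵥ v)) i = (Pm n *ᵥ (Tm n *ᵥ v)) i := by
  have hi := i.isLt
  rw [Pm_mulVec_fold (Tm_supported v) i, if_pos him, ext_apply, Tm_mulVec, if_pos him,
    pathAdj_mulVec]
  set a := (i : ℕ) with ha
  have hwlt : ∀ k : ℕ, k < (n+1)/2 → ext (Pm n *ᵥ v) k = ext v k := by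
    intro k hk
    rw [ext_lt _ (by omega : k < n), Pm_mulVec_fold hv, if_pos (by simpa using hk),
      ext_lt v (by omega : k < n)]
  by_cases hA : a + 1 < (n+1)/2
  · rw [hwlt (a+1) hA, if_pos hA,
      if_neg (show ¬(a+1 = (n+1)/2 ∧ n % 2 = 1 ∧ 0 < a) from by omega),
      if_neg (show ¬(a+1 = (n+1)/2 ∧ n % 2 = 0) from by omega)]
    by_cases h2 : 0 < a
    · rw [if_pos h2, if_pos h2, hwlt (a-1) (by omega)]
      ring
    · rw [if_neg h2, if_neg h2]
      ring
  · -- a + 1 = (n+1)/2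
    have hAm : a + 1 = (n+1)/2 := by omega
    by_cases hn1 : n = 1
    · subst hn1
      rw [ext_ge _ (by omega), if_neg (show ¬0 < a from by omega),
        if_neg (show ¬a + 1 < (1+1)/2 from by omega), if_neg (show ¬0 < a from by omega),
        if_neg (show ¬(a+1 = (1+1)/2 ∧ 1 % 2 = 1 ∧ 0 < a) from by omega),
        if_neg (show ¬(a+1 = (1+1)/2 ∧ 1 % 2 = 0) from by omega)]
      norm_num
    · have hn2 : 2 ≤ n := by omega
      have hmn : (n+1)/2 < n := by omega
      rw [if_neg hA]
      have hwm : ext (Pm n *ᵥ v) (a+1) = ext v (n - 1 - (n+1)/2) := by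
        rw [ext_lt _ (by omega : a + 1 < n), Pm_mulVec_fold hv, if_neg (by simp; omega)]
        congr 1
        simp
        omega
      rw [hwm]
      by_cases hpar : n % 2 = 1
      · have h0a : 0 < a := by omega
        rw [if_pos (⟨hAm, hpar, h0a⟩ : a+1 = (n+1)/2 ∧ n % 2 = 1 ∧ 0 < a),
          if_neg (show ¬(a+1 = (n+1)/2 ∧ n % 2 = 0) from by omega),
          if_pos h0a, if_pos h0a, hwlt (a-1) (by omega),
          show n - 1 - (n+1)/2 = a - 1 from by omega]
        ring
      · rw [if_neg (show ¬(a+1 = (n+1)/2 ∧ n % 2 = 1 ∧ 0 < a) from by omega),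
          if_pos (⟨hAm, by omega⟩ : a+1 = (n+1)/2 ∧ n % 2 = 0),
          show n - 1 - (n+1)/2 = a from by omega]
        by_cases h2 : 0 < a
        · rw [if_pos h2, if_pos h2, hwlt (a-1) (by omega)]
          ring
        · rw [if_neg h2, if_neg h2]
          ring

lemma key {v : Fin n → ℤ} (hv : Supported v) :
    pathAdj n *ᵥ (Pm n *ᵥ v) = Pm n *ᵥ (Tm n *ᵥ v) := by
  funext i
  have hi := i.isLt
  by_cases him : (i : ℕ) < (n+1)/2
  · exact key_lt hv i him
  · have hlt : n - 1 - (i:ℕ) < (n+1)/2 := by omega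
    have hin : n - 1 - (i:ℕ) < n := by omega
    calc (pathAdj n *ᵥ (Pm n *ᵥ v)) i
        = ext (pathAdj n *ᵥ (Pm n *ᵥ v)) (n - 1 - (i:ℕ)) := A_symm (fold_symm hv) i
      _ = (pathAdj n *ᵥ (Pm n *ᵥ v)) ⟨n - 1 - (i:ℕ), hin⟩ := ext_lt _ hin
      _ = (Pm n *ᵥ (Tm n *ᵥ v)) ⟨n - 1 - (i:ℕ), hin⟩ := key_lt hv _ (by simpa using hlt)
      _ = ext (Pm n *ᵥ (Tm n *ᵥ v)) (n - 1 - (i:ℕ)) := (ext_lt _ hin).symm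
      _ = (Pm n *ᵥ (Tm n *ᵥ v)) i := (fold_symm (Tm_supported v) i).symm

lemma uv_supported : Supported (uv n) := fun i hi => by
  unfold uv
  rw [if_neg (by omega)]

lemma d0_supported (hn : 0 < n) : Supported (d0 n) := fun i hi => by
  unfold d0
  rw [if_neg (by omega)]

lemma supported_pow {v : Fin n → ℤ} (hv : Supported v) (k : ℕ) :
    Supported ((Tm n)^k *ᵥ v) := by
  induction k with
  | zero => simpa [Matrix.one_mulVec] using hv
  | succ k IH =>
    rw [pow_succ', ← Matrix.mulVec_mulVec]
    exact Tm_supported _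

lemma Tm_one_vec (hn2 : 2 ≤ n) :
    Tm n *ᵥ uv n = fun i => 2 * uv n i - d0 n i := by
  funext i
  have hi := i.isLt
  rw [Tm_mulVec]
  simp only [ext, uv, d0, Fin.val_mk]
  split_ifs <;> omega

lemma tri_zero (k : ℕ) : ∀ i : Fin n, k < (i : ℕ) → ((Tm n)^k *ᵥ d0 n) i = 0 := by
  induction k with
  | zero =>
    intro i hik
    simp only [pow_zero, Matrix.one_mulVec, d0]
    rw [if_neg (by omega)]
  | succ k IH =>
    intro i hik
    have hi := i.isLt
    have ext0 : ∀ a : ℕ, k < a → ext ((Tm n)^k *ᵥ d0 n) a = 0 := by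
      intro a ha
      by_cases h : a < n
      · rw [ext_lt _ h]
        exact IH ⟨a, h⟩ ha
      · exact ext_ge _ (Nat.not_lt.1 h)
    rw [pow_succ', ← Matrix.mulVec_mulVec, Tm_mulVec]
    have e1 := ext0 ((i:ℕ)+1) (by omega)
    have e2 := ext0 ((i:ℕ)-1) (by omega)
    have e3 := ext0 (i:ℕ) (by omega)
    split_ifs <;> simp [e1, e2, e3]

lemma tri_zero_ext (k a : ℕ) (hka : k < a) : ext ((Tm n)^k *ᵥ d0 n) a = 0 := by
  by_cases h : a < n
  · rw [ext_lt _ h]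
    exact tri_zero k ⟨a, h⟩ hka
  · exact ext_ge _ (Nat.not_lt.1 h)

lemma tri_diag : ∀ (k : ℕ), k + 1 < (n+1)/2 → ∀ (i : Fin n), (i : ℕ) = k →
    ((Tm n)^k *ᵥ d0 n) i = 1 := by
  intro k
  induction k with
  | zero =>
    intro hk i hik
    simp only [pow_zero, Matrix.one_mulVec, d0]
    rw [if_pos hik]
  | succ k IH =>
    intro hk i hik
    have hi := i.isLt
    rw [pow_succ', ← Matrix.mulVec_mulVec, Tm_mulVec, if_pos (by omega),
      if_pos (show (i:ℕ)+1 < (n+1)/2 by omega), if_pos (show 0 < (i:ℕ) by omega),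
      if_neg (show ¬((i:ℕ)+1 = (n+1)/2 ∧ n % 2 = 1 ∧ 0 < (i:ℕ)) from by omega),
      if_neg (show ¬((i:ℕ)+1 = (n+1)/2 ∧ n % 2 = 0) from by omega),
      tri_zero_ext k ((i:ℕ)+1) (by omega)]
    have hkn : k < n := by omega
    rw [show (i:ℕ)-1 = k from by omega, ext_lt _ hkn, IH (by omega) ⟨k, hkn⟩ rfl]
    ring

def Xm (n : ℕ) : Matrix (Fin n) (Fin n) ℤ :=
  Matrix.of fun i j => ((Tm n)^(j : ℕ) *ᵥ uv n) i

lemma Pu_one : Pm n *ᵥ uv n = fun _ => (1 : ℤ) := by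
  funext i
  have hi := i.isLt
  rw [Pm_mulVec_fold uv_supported i]
  simp only [ext, uv, Fin.val_mk]
  split_ifs <;> omega

lemma walk_eq : walkMatrix (pathAdj n) = Pm n * Xm n := by
  have hcol : ∀ j : ℕ, (pathAdj n)^j *ᵥ (fun _ => (1:ℤ)) = Pm n *ᵥ ((Tm n)^j *ᵥ uv n) := by
    intro j
    induction j with
    | zero => simp [Matrix.one_mulVec, Pu_one]
    | succ j IH =>
      rw [pow_succ', ← Matrix.mulVec_mulVec, IH, pow_succ', ← Matrix.mulVec_mulVec]
      exact key (supported_pow uv_supported j)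
  ext i j
  have h := congrFun (hcol (j : ℕ)) i
  rw [Matrix.mul_apply]
  simp only [walkMatrix, Matrix.of_apply]
  rw [h]
  simp [Matrix.mulVec, dotProduct, Xm]

def V1m (n : ℕ) : Matrix (Fin n) (Fin n) ℤ :=
  Matrix.of fun i j => if (i:ℕ) = (j:ℕ) then 1 else if (i:ℕ) + 1 = (j:ℕ) then -2 else 0

def Gm (n : ℕ) : Matrix (Fin n) (Fin n) ℤ :=
  Matrix.of fun i j =>
    if (j:ℕ) = 0 then uv n i else -(((Tm n)^((j:ℕ)-1)) *ᵥ d0 n) i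

lemma XV1 : Xm n * V1m n = Gm n := by
  ext i j
  rw [Matrix.mul_apply]
  have hj := j.isLt
  by_cases hj0 : 0 < (j:ℕ)
  · have h1 : ∀ k : Fin n, Xm n i k * V1m n k j
        = (if (k:ℕ) = (j:ℕ) then Xm n i k else 0)
          + (if (k:ℕ) = (j:ℕ) - 1 then (-2) * Xm n i k else 0) := by
      intro k
      have hk := k.isLt
      unfold V1m
      simp only [Matrix.of_apply]
      split_ifs <;> first | ring1 | omega
    rw [Finset.sum_congr rfl fun k _ => h1 k, Finset.sum_add_distrib, sum_delta_nat,
      sum_delta_nat, ext_apply, ext_lt _ (show (j:ℕ) - 1 < n by omega)]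
    have hn2 : 2 ≤ n := by omega
    have hfun : Tm n *ᵥ uv n = (2:ℤ) • uv n - d0 n := by
      rw [Tm_one_vec hn2]
      funext x
      simp only [Pi.sub_apply, Pi.smul_apply, smul_eq_mul]
    have hpow : (Tm n)^(j:ℕ) = (Tm n)^((j:ℕ)-1) * Tm n := by
      rw [← pow_succ]
      congr 1
      omega
    show Xm n i j + (-2) * Xm n i ⟨(j:ℕ)-1, _⟩ = Gm n i j
    unfold Xm Gm
    simp only [Matrix.of_apply, Fin.val_mk]
    rw [if_neg (by omega), hpow, ← Matrix.mulVec_mulVec, hfun, Matrix.mulVec_sub,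
      Matrix.mulVec_smul]
    simp only [Pi.sub_apply, Pi.smul_apply, smul_eq_mul]
    ring
  · have h1 : ∀ k : Fin n, Xm n i k * V1m n k j
        = (if (k:ℕ) = (j:ℕ) then Xm n i k else 0) := by
      intro k
      have hk := k.isLt
      unfold V1m
      simp only [Matrix.of_apply]
      split_ifs <;> first | ring1 | omega
    rw [Finset.sum_congr rfl fun k _ => h1 k, sum_delta_nat, ext_apply]
    unfold Xm Gm
    simp only [Matrix.of_apply]
    rw [if_pos (by omega), show (j:ℕ) = 0 from by omega, pow_zero, Matrix.one_mulVec]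

def Km (n : ℕ) : Matrix (Fin n) (Fin n) ℤ :=
  Matrix.of fun i j =>
    if (n+1)/2 ≤ (i:ℕ) then (if (i:ℕ) = (j:ℕ) then 1 else 0)
    else if (j:ℕ) + 1 < (n+1)/2 then -(((Tm n)^(j:ℕ)) *ᵥ d0 n) i
    else if (j:ℕ) + 1 = (n+1)/2 then 1
    else -(((Tm n)^((j:ℕ)-1)) *ᵥ d0 n) i

def tauPerm (n : ℕ) (hn : 0 < n) : Equiv.Perm (Fin n) where
  toFun j := if h : (j:ℕ) + 1 < (n+1)/2 then ⟨(j:ℕ)+1, by omega⟩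
    else if (j:ℕ) + 1 = (n+1)/2 then ⟨0, hn⟩ else j
  invFun k := if h : (k:ℕ) = 0 then ⟨(n+1)/2 - 1, by omega⟩
    else if h2 : (k:ℕ) < (n+1)/2 then ⟨(k:ℕ) - 1, lt_of_le_of_lt (Nat.sub_le _ _) k.isLt⟩
    else k
  left_inv := by
    intro j
    have hj := j.isLt
    dsimp only
    by_cases h1 : (j:ℕ) + 1 < (n+1)/2
    · rw [dif_pos h1]
      apply Fin.ext
      rw [dif_neg (by simp), dif_pos (by simp; omega)]
      simp
    · by_cases h2 : (j:ℕ) + 1 = (n+1)/2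
      · rw [dif_neg h1, if_pos h2]
        apply Fin.ext
        rw [dif_pos (by simp)]
        simp
        omega
      · rw [dif_neg h1, if_neg h2]
        apply Fin.ext
        rw [dif_neg (by omega), dif_neg (by omega)]
  right_inv := by
    intro k
    have hk := k.isLt
    dsimp only
    by_cases h1 : (k:ℕ) = 0
    · rw [dif_pos h1]
      apply Fin.ext
      rw [dif_neg (by simp; omega), if_pos (by simp; omega)]
      simp
      omega
    · by_cases h2 : (k:ℕ) < (n+1)/2
      · rw [dif_neg h1, dif_pos h2]
        apply Fin.ext
        rw [dif_pos (by simp; omega)]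
        simp
        omega
      · rw [dif_neg h1, dif_neg h2]
        apply Fin.ext
        rw [dif_neg (by omega), if_neg (by omega)]

lemma tau_val (hn : 0 < n) (j : Fin n) :
    ((tauPerm n hn j : Fin n) : ℕ) =
      if (j:ℕ) + 1 < (n+1)/2 then (j:ℕ)+1
      else if (j:ℕ) + 1 = (n+1)/2 then 0 else (j:ℕ) := by
  unfold tauPerm
  dsimp only [Equiv.coe_fn_mk]
  split_ifs <;> simp

lemma G_sub (hn : 0 < n) :
    (Gm n).submatrix id (tauPerm n hn) =
      Matrix.diagonal (fun i : Fin n => if (i:ℕ) < (n+1)/2 then (1:ℤ) else 0) * Km n := by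
  ext i j
  rw [Matrix.submatrix_apply, Matrix.diagonal_mul, id]
  have hi := i.isLt
  have hj := j.isLt
  have ht := tau_val hn j
  unfold Gm Km
  simp only [Matrix.of_apply]
  by_cases him : (n+1)/2 ≤ (i:ℕ)
  · rw [if_pos him, if_neg (by omega : ¬(i:ℕ) < (n+1)/2), zero_mul]
    split_ifs with h
    · unfold uv
      rw [if_neg (by omega)]
    · have h0 := supported_pow (d0_supported hn) (((tauPerm n hn) j : ℕ) - 1) i him
      rw [h0, neg_zero]
  · have h1m : (i:ℕ) < (n+1)/2 := by omega
    rw [if_neg him, if_pos h1m, one_mul]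
    by_cases hj1 : (j:ℕ)+1 < (n+1)/2
    · rw [if_pos hj1]
      have ht' : (((tauPerm n hn) j : Fin n) : ℕ) = (j:ℕ)+1 := by rw [ht, if_pos hj1]
      rw [ht', if_neg (by omega), Nat.add_sub_cancel]
    · by_cases hj2 : (j:ℕ)+1 = (n+1)/2
      · have ht' : (((tauPerm n hn) j : Fin n) : ℕ) = 0 := by
          rw [ht, if_neg hj1, if_pos hj2]
        rw [if_neg hj1, if_pos hj2, ht', if_pos rfl]
        unfold uv
        rw [if_pos (by omega)]
      · have ht' : (((tauPerm n hn) j : Fin n) : ℕ) = (j:ℕ) := by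
          rw [ht, if_neg hj1, if_neg hj2]
        rw [if_neg hj1, if_neg hj2, ht', if_neg (by omega)]

lemma Pm_det : (Pm n).det = 1 := by
  have h : (Pm n).BlockTriangular OrderDual.toDual := by
    intro i j hij
    simp only [OrderDual.toDual_lt_toDual] at hij
    have hij' : (i:ℕ) < (j:ℕ) := hij
    unfold Pm
    simp only [Matrix.of_apply]
    rw [if_neg (by omega), if_neg (by omega)]
  rw [Matrix.det_of_lowerTriangular (Pm n) h]
  apply Finset.prod_eq_one
  intro i _
  unfold Pm
  simp

lemma V1_det : (V1m n).det = 1 := by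
  have h : (V1m n).BlockTriangular id := by
    intro i j hij
    have hij' : (j:ℕ) < (i:ℕ) := hij
    unfold V1m
    simp only [Matrix.of_apply]
    rw [if_neg (by omega), if_neg (by omega)]
  rw [Matrix.det_of_upperTriangular h]
  apply Finset.prod_eq_one
  intro i _
  unfold V1m
  simp

lemma Km_det_isUnit (hn : 0 < n) : IsUnit (Km n).det := by
  have h : (Km n).BlockTriangular id := by
    intro i j hij
    have hij' : (j:ℕ) < (i:ℕ) := hij
    have hi := i.isLt
    unfold Km
    simp only [Matrix.of_apply]
    by_cases him : (n+1)/2 ≤ (i:ℕ)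
    · rw [if_pos him, if_neg (by omega)]
    · rw [if_neg him, if_pos (by omega : (j:ℕ)+1 < (n+1)/2),
        tri_zero (j:ℕ) i (by omega), neg_zero]
  rw [Matrix.det_of_upperTriangular h]
  have hdiag : ∀ i : Fin n, Km n i i = 1 ∨ Km n i i = -1 := by
    intro i
    have hi := i.isLt
    unfold Km
    simp only [Matrix.of_apply]
    by_cases him : (n+1)/2 ≤ (i:ℕ)
    · left
      rw [if_pos him]
      simp
    · rw [if_neg him]
      by_cases h1 : (i:ℕ)+1 < (n+1)/2
      · rw [if_pos h1, tri_diag (i:ℕ) h1 i rfl]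
        right
        rfl
      · rw [if_neg h1, if_pos (by omega)]
        left
        rfl
  apply IsUnit.of_mul_eq_one (∏ i, Km n i i)
  have hsq : ∀ i ∈ Finset.univ, Km n i i * Km n i i = (1:ℤ) := by
    intro i _
    rcases hdiag i with h'|h' <;> rw [h'] <;> norm_num
  rw [← Finset.prod_mul_distrib, Finset.prod_congr rfl hsq, Finset.prod_const_one]

end SNFPath


open SNFPath in
/-- The Smith normal form of the walk matrix of the Dynkin graph `A_n` is
`diag(1, …, 1, 0, …, 0)` with exactly `⌈n/2⌉` ones. -/
theorem smithNormalForm_walkMatrix_pathAdj (n : ℕ) (hn : 0 < n) :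
    ∃ U V : Matrix (Fin n) (Fin n) ℤ, IsUnit U.det ∧ IsUnit V.det ∧
      U * walkMatrix (pathAdj n) * V =
        Matrix.diagonal (fun i : Fin n => if (i : ℕ) < (n + 1) / 2 then 1 else 0) := by
  have hP : IsUnit (Pm n).det := by
    rw [Pm_det]
    exact isUnit_one
  have hK : IsUnit (Km n).det := Km_det_isUnit hn
  refine ⟨(Pm n)⁻¹, V1m n * (Equiv.Perm.permMatrix ℤ (tauPerm n hn).symm) * (Km n)⁻¹, ?_, ?_, ?_⟩
  · exact Matrix.isUnit_nonsing_inv_det _ hP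
  · rw [Matrix.det_mul, Matrix.det_mul, Matrix.det_permutation, V1_det]
    exact ((isUnit_one).mul (Equiv.Perm.sign _).isUnit).mul
      (Matrix.isUnit_nonsing_inv_det _ hK)
  · have hperm : Gm n * Equiv.Perm.permMatrix ℤ (tauPerm n hn).symm
        = (Gm n).submatrix id (tauPerm n hn) := by
      have := PEquiv.mul_toMatrix_toPEquiv (Gm n) (tauPerm n hn).symm
      rwa [Equiv.symm_symm] at this
    rw [walk_eq, ← Matrix.mul_assoc ((Pm n)⁻¹) (Pm n) (Xm n),
      Matrix.nonsing_inv_mul _ hP, Matrix.one_mul, ← Matrix.mul_assoc,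
      ← Matrix.mul_assoc, XV1, hperm, G_sub hn,
      Matrix.mul_assoc, Matrix.mul_nonsing_inv _ hK, Matrix.mul_one]
end

section
/- Let n be a positive integer and let W(A_n) be the walk matrix of the Dynkin graph A_n. Then the rank of W(A_n) (as a matrix over the rationals) equals ⌈n/2⌉. -/
open Matrix

/-- walk counts on the half-infinite path 0,1,2,... -/
def hw : ℕ → ℕ → ℤ
  | 0, _ => 1
  | j+1, 0 => hw j 1
  | j+1, i+1 => hw j i + hw j (i+2)

lemma hw_ge : ∀ j i, j ≤ i → hw j i = 2 ^ j := by
  intro j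
  induction j with
  | zero => intro i _; rfl
  | succ j ih =>
    intro i hji
    obtain ⟨i, rfl⟩ : ∃ i', i = i' + 1 := ⟨i - 1, by omega⟩
    rw [hw, ih i (by omega), ih (i+2) (by omega), pow_succ]
    ring

lemma hw_diag : ∀ j, hw (j+1) j = 2 ^ (j+1) - 1 := by
  intro j
  induction j with
  | zero => rfl
  | succ j ih =>
    rw [hw, ih, hw_ge (j+1) (j+2) (by omega)]
    ring

/-- mulVec formula for the path adjacency matrix -/
lemma pathAdj_mulVec {n : ℕ} (v : Fin n → ℤ) (i : Fin n) :
    (pathAdj n *ᵥ v) i =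
      (if h : (i : ℕ) + 1 < n then v ⟨(i : ℕ) + 1, h⟩ else 0) +
      (if h : 0 < (i : ℕ) then v ⟨(i : ℕ) - 1, by omega⟩ else 0) := by
  have key : ∀ j : Fin n, pathAdj n i j * v j =
      (if ((i : ℕ) + 1 = (j : ℕ)) then v j else 0) +
      (if ((j : ℕ) + 1 = (i : ℕ)) then v j else 0) := by
    intro j
    simp only [pathAdj, Matrix.of_apply]
    by_cases h1 : (i : ℕ) + 1 = (j : ℕ) <;> by_cases h2 : (j : ℕ) + 1 = (i : ℕ) <;>
      simp [h1, h2] <;> omega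
  rw [Matrix.mulVec, dotProduct]
  simp only [key, Finset.sum_add_distrib]
  congr 1
  · by_cases h : (i : ℕ) + 1 < n
    · rw [dif_pos h]
      rw [Finset.sum_eq_single (⟨(i : ℕ) + 1, h⟩ : Fin n)]
      · simp
      · intro b _ hb
        rw [if_neg]
        intro hc
        exact hb (Fin.ext hc.symm)
      · simp
    · rw [dif_neg h]
      apply Finset.sum_eq_zero
      intro b _
      rw [if_neg]
      intro hc
      omega
  · by_cases h : 0 < (i : ℕ)
    · rw [dif_pos h]
      rw [Finset.sum_eq_single (⟨(i : ℕ) - 1, by omega⟩ : Fin n)]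
      · simp; omega
      · intro b _ hb
        rw [if_neg]
        intro hc
        apply hb (Fin.ext ?_)
        simp
        omega
      · simp
    · rw [dif_neg h]
      apply Finset.sum_eq_zero
      intro b _
      rw [if_neg]
      intro hc
      omega

/-- iterated walk vector -/
def wv (n : ℕ) (j : ℕ) : Fin n → ℤ := (pathAdj n) ^ j *ᵥ (fun _ => 1)

lemma wv_succ (n j : ℕ) : wv n (j+1) = pathAdj n *ᵥ wv n j := by
  unfold wv
  rw [pow_succ', Matrix.mulVec_mulVec]

lemma wv_symm (n : ℕ) : ∀ j (i : Fin n), wv n j (Fin.rev i) = wv n j i := by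
  intro j
  induction j with
  | zero => intro i; simp [wv]
  | succ j ih =>
    intro i
    have hi := i.isLt
    have hrev : (Fin.rev i : ℕ) = n - 1 - (i : ℕ) := by
      rw [Fin.val_rev]; omega
    rw [wv_succ, pathAdj_mulVec, pathAdj_mulVec]
    have e1 : (if h : (Fin.rev i : ℕ) + 1 < n then wv n j ⟨(Fin.rev i : ℕ) + 1, h⟩ else 0)
        = (if h : 0 < (i : ℕ) then wv n j ⟨(i : ℕ) - 1, by omega⟩ else 0) := by
      by_cases h : 0 < (i : ℕ)
      · rw [dif_pos (by omega), dif_pos h]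
        rw [show (⟨(Fin.rev i : ℕ) + 1, by omega⟩ : Fin n)
            = Fin.rev ⟨(i : ℕ) - 1, by omega⟩ by
          apply Fin.ext; simp only [Fin.val_rev]; omega]
        exact ih _
      · rw [dif_neg (by omega), dif_neg h]
    have e2 : (if h : 0 < (Fin.rev i : ℕ) then wv n j ⟨(Fin.rev i : ℕ) - 1, by omega⟩ else 0)
        = (if h : (i : ℕ) + 1 < n then wv n j ⟨(i : ℕ) + 1, h⟩ else 0) := by
      by_cases h : (i : ℕ) + 1 < n
      · rw [dif_pos (by omega), dif_pos h]
        rw [show (⟨(Fin.rev i : ℕ) - 1, by omega⟩ : Fin n)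
            = Fin.rev ⟨(i : ℕ) + 1, h⟩ by
          apply Fin.ext; simp only [Fin.val_rev]; omega]
        exact ih _
      · rw [dif_neg (by omega), dif_neg h]
    rw [e1, e2]
    ring

lemma wv_eq_hw (n : ℕ) : ∀ j (i : Fin n), (i : ℕ) + j < n → wv n j i = hw j (i : ℕ) := by
  intro j
  induction j with
  | zero => intro i _; simp [wv, hw]
  | succ j ih =>
    intro i hij
    rw [wv_succ, pathAdj_mulVec]
    rw [dif_pos (by omega)]
    rw [ih ⟨(i:ℕ)+1, by omega⟩ (by simp; omega)]
    by_cases h : 0 < (i : ℕ)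
    · rw [dif_pos h, ih ⟨(i:ℕ)-1, by omega⟩ (by simp; omega)]
      obtain ⟨i', hi'⟩ : ∃ i', (i : ℕ) = i' + 1 := ⟨(i:ℕ) - 1, by omega⟩
      simp only [hi']
      rw [show i' + 1 - 1 = i' from rfl, show i' + 1 + 1 = i' + 2 from rfl, hw]
      ring
    · rw [dif_neg h]
      have : (i : ℕ) = 0 := by omega
      simp only [this]
      rw [show (0:ℕ) + 1 = 1 from rfl, hw]
      ring

/-- triangular change of basis matrix -/
noncomputable def Tm (K : ℕ) : Matrix (Fin K) (Fin K) ℚ :=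
  fun i c => if (c : ℕ) = 0 then 1 else 2 ^ (c : ℕ) - ((hw (c : ℕ) (i : ℕ) : ℤ) : ℚ)

noncomputable def Cm (K : ℕ) : Matrix (Fin K) (Fin K) ℚ :=
  fun c j => (if (c : ℕ) = 0 then (if (j : ℕ) = 0 then 0 else 2 ^ (j : ℕ)) else 0)
    + (if c = j then (if (j : ℕ) = 0 then 1 else -1) else 0)

lemma Tm_mul_Cm (K : ℕ) (hK : 0 < K) (i j : Fin K) :
    (Tm K * Cm K) i j = ((hw (j : ℕ) (i : ℕ) : ℤ) : ℚ) := by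
  rw [Matrix.mul_apply]
  by_cases hj : (j : ℕ) = 0
  · have hC : ∀ c : Fin K, Cm K c j = if c = j then 1 else 0 := by
      intro c
      unfold Cm
      by_cases h1 : (c : ℕ) = 0 <;> simp [h1, hj]
    simp only [hC, mul_ite, mul_one, mul_zero, Finset.sum_ite_eq', Finset.mem_univ, if_true]
    rw [hj, show hw 0 (i : ℕ) = 1 from rfl]
    simp [Tm, hj]
  · have hsplit : ∀ c : Fin K, Tm K i c * Cm K c j
        = (if c = ⟨0, hK⟩ then Tm K i c * 2 ^ (j : ℕ) else 0)
        + (if c = j then Tm K i c * (-1) else 0) := by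
      intro c
      have hc0 : (c = (⟨0, hK⟩ : Fin K)) ↔ ((c : ℕ) = 0) := by rw [Fin.ext_iff]
      unfold Cm
      by_cases h1 : (c : ℕ) = 0 <;> by_cases h2 : c = j
      · exact absurd (h2 ▸ h1) hj
      · simp [h1, h2, hj, hc0]
      · subst h2; simp [h1, hc0]
      · simp [h1, h2, hc0]
    rw [Finset.sum_congr rfl (fun c _ => hsplit c), Finset.sum_add_distrib,
      Finset.sum_ite_eq', Finset.sum_ite_eq']
    simp only [Finset.mem_univ, if_true]
    have h0 : Tm K i ⟨0, hK⟩ = 1 := by simp [Tm]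
    have hTj : Tm K i j = 2 ^ (j : ℕ) - ((hw (j : ℕ) (i : ℕ) : ℤ) : ℚ) := by simp [Tm, hj]
    rw [h0, hTj]
    ring

lemma det_Cm_ne_zero (K : ℕ) : (Cm K).det ≠ 0 := by
  have htri : (Cm K).BlockTriangular id := by
    intro i j hij
    have h1 : (i : ℕ) ≠ 0 := by
      have : (j : ℕ) < (i : ℕ) := hij
      omega
    have h2 : i ≠ j := by
      intro h; exact absurd (h ▸ rfl) (ne_of_gt hij)
    simp [Cm, h1, h2]
  rw [Matrix.det_of_upperTriangular htri]
  apply Finset.prod_ne_zero_iff.mpr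
  intro j _
  by_cases hj : (j : ℕ) = 0 <;> simp [Cm, hj]

lemma det_Tm_ne_zero (K : ℕ) (hK : 0 < K) : (Tm K).det ≠ 0 := by
  -- the column permutation
  have hσv : ∀ c : Fin K, (c : ℕ) ≠ 0 → K - (c : ℕ) < K := by
    intro c hc; have := c.isLt; omega
  set σf : Fin K → Fin K := fun c =>
    if h : (c : ℕ) = 0 then c else ⟨K - (c : ℕ), hσv c h⟩ with hσf
  have hinv : Function.Involutive σf := by
    intro c
    by_cases h : (c : ℕ) = 0
    · simp [hσf, h]
    · have h2 : K - (c : ℕ) ≠ 0 := by have := c.isLt; omega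
      simp only [hσf, dif_neg h]
      rw [dif_neg h2]
      apply Fin.ext
      simp
      have := c.isLt; omega
  set σ : Equiv.Perm (Fin K) := hinv.toPerm σf with hσ
  set Q : Matrix (Fin K) (Fin K) ℚ := (Tm K).submatrix Fin.rev σf with hQ
  have hQtri : Q.BlockTriangular OrderDual.toDual := by
    intro i j hij
    have hij' : (i : ℕ) < (j : ℕ) := hij
    have hj0 : (j : ℕ) ≠ 0 := by omega
    have hji := j.isLt
    have hii := i.isLt
    have hval : (σf j : ℕ) = K - (j : ℕ) := by simp [hσf, hj0]
    have hrev : (Fin.rev i : ℕ) = K - 1 - (i : ℕ) := by rw [Fin.val_rev]; omega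
    show Tm K (Fin.rev i) (σf j) = 0
    unfold Tm
    rw [if_neg (by omega), hval, hrev, hw_ge (K - (j : ℕ)) (K - 1 - (i : ℕ)) (by omega)]
    push_cast
    ring
  have hQdet : Q.det ≠ 0 := by
    rw [Matrix.det_of_lowerTriangular Q hQtri]
    apply Finset.prod_ne_zero_iff.mpr
    intro i _
    have hii := i.isLt
    have hrev : (Fin.rev i : ℕ) = K - 1 - (i : ℕ) := by rw [Fin.val_rev]; omega
    show Tm K (Fin.rev i) (σf i) ≠ 0
    by_cases h : (i : ℕ) = 0
    · have : (σf i : ℕ) = 0 := by simp [hσf, h]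
      simp [Tm, this]
    · have hval : (σf i : ℕ) = K - (i : ℕ) := by simp [hσf, h]
      unfold Tm
      rw [if_neg (by omega), hval, hrev]
      have hd : K - (i : ℕ) = (K - 1 - (i : ℕ)) + 1 := by omega
      rw [hd, hw_diag (K - 1 - (i : ℕ))]
      push_cast
      ring_nf
      norm_num
  intro hT
  apply hQdet
  have hQeq : Q = ((Tm K).submatrix id σ).submatrix Fin.revPerm id := by
    ext a b
    simp [hQ, Matrix.submatrix_apply, hσ]
  rw [hQeq, Matrix.det_permute, Matrix.det_permute', hT]
  ring

/-- The rank (over ℚ) of the walk matrix of the Dynkin graph `A_n` is `⌈n/2⌉`. -/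
theorem rank_walkMatrix_pathAdj (n : ℕ) (hn : 0 < n) :
    ((walkMatrix (pathAdj n)).map (Int.cast : ℤ → ℚ)).rank = (n + 1) / 2 := by
  set K := (n + 1) / 2 with hKdef
  have hK : 0 < K := by omega
  have hKn : K ≤ n := by omega
  have h2K : 2 * K ≤ n + 1 := by omega
  set Wq := (walkMatrix (pathAdj n)).map (Int.cast : ℤ → ℚ) with hWqdef
  have hWq : ∀ (i : Fin n) (j : Fin n), Wq i j = ((wv n (j : ℕ) i : ℤ) : ℚ) := fun i j => rfl
  apply le_antisymm
  · -- upper bound : rank ≤ K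
    have hmin : ∀ i : Fin n, min (i : ℕ) (n - 1 - (i : ℕ)) < K := by
      intro i; have := i.isLt; omega
    set E : Matrix (Fin n) (Fin K) ℚ :=
      fun i c => if (c : ℕ) = min (i : ℕ) (n - 1 - (i : ℕ)) then 1 else 0 with hE
    set F : Matrix (Fin K) (Fin n) ℚ := fun c j => Wq ⟨(c : ℕ), by have := c.isLt; omega⟩ j
      with hF
    have hfact : Wq = E * F := by
      ext i j
      rw [Matrix.mul_apply]
      rw [Finset.sum_eq_single (⟨min (i : ℕ) (n - 1 - (i : ℕ)), hmin i⟩ : Fin K)]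
      · have hEone : E i ⟨min (i : ℕ) (n - 1 - (i : ℕ)), hmin i⟩ = 1 := by simp [hE]
        rw [hEone, one_mul, hF]
        simp only
        rw [hWq, hWq]
        congr 1
        by_cases hle : (i : ℕ) ≤ n - 1 - (i : ℕ)
        · have : min (i : ℕ) (n - 1 - (i : ℕ)) = (i : ℕ) := by omega
          simp only [this]
        · have hmin' : min (i : ℕ) (n - 1 - (i : ℕ)) = n - 1 - (i : ℕ) := by omega
          have hrevi : (⟨min (i : ℕ) (n - 1 - (i : ℕ)), by have := i.isLt; omega⟩ : Fin n)
              = Fin.rev i := by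
            apply Fin.ext; simp only [Fin.val_rev]; have := i.isLt; omega
          rw [hrevi, wv_symm]
      · intro b _ hb
        have : E i b = 0 := by
          rw [hE]
          simp only
          rw [if_neg]
          intro hc
          exact hb (Fin.ext hc)
        rw [this, zero_mul]
      · simp
    calc Wq.rank = (E * F).rank := by rw [hfact]
      _ ≤ F.rank := Matrix.rank_mul_le_right E F
      _ ≤ Fintype.card (Fin K) := F.rank_le_card_height
      _ = K := Fintype.card_fin K
  · -- lower bound : K ≤ rank
    set f : Fin K → Fin n := fun i => ⟨(i : ℕ), by have := i.isLt; omega⟩ with hf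
    set S : Matrix (Fin K) (Fin K) ℚ := Wq.submatrix f f with hSdef
    have hS : ∀ i j : Fin K, S i j = ((hw (j : ℕ) (i : ℕ) : ℤ) : ℚ) := by
      intro i j
      rw [hSdef, Matrix.submatrix_apply, hWq]
      have := i.isLt; have := j.isLt
      rw [wv_eq_hw n (j : ℕ) (f i) (by simp [hf]; omega)]
    have hStc : S = Tm K * Cm K := by
      ext i j
      rw [hS i j, Tm_mul_Cm K hK i j]
    have hSdet : S.det ≠ 0 := by
      rw [hStc, Matrix.det_mul]
      exact mul_ne_zero (det_Tm_ne_zero K hK) (det_Cm_ne_zero K)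
    have hSrank : S.rank = K := by
      rw [Matrix.rank_of_isUnit S ((Matrix.isUnit_iff_isUnit_det S).mpr
        (isUnit_iff_ne_zero.mpr hSdet)), Fintype.card_fin]
    -- S = (P * Wq) * Pᵀ
    set P : Matrix (Fin K) (Fin n) ℚ := fun c a => if a = f c then 1 else 0 with hP
    have hfact2 : S = (P * Wq) * Pᵀ := by
      ext c j
      rw [Matrix.mul_apply]
      have : ∀ b, (P * Wq) c b * Pᵀ b j = if b = f j then (P * Wq) c b else 0 := by
        intro b
        rw [Matrix.transpose_apply, hP]
        by_cases h : b = f j <;> simp [h]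
      rw [Finset.sum_congr rfl (fun b _ => this b), Finset.sum_ite_eq']
      simp only [Finset.mem_univ, if_true]
      rw [Matrix.mul_apply]
      have h2 : ∀ a, P c a * Wq a (f j) = if a = f c then Wq a (f j) else 0 := by
        intro a
        rw [hP]
        by_cases h : a = f c <;> simp [h]
      rw [Finset.sum_congr rfl (fun a _ => h2 a), Finset.sum_ite_eq']
      simp [hSdef]
    calc K = S.rank := hSrank.symm
      _ = ((P * Wq) * Pᵀ).rank := by rw [hfact2]
      _ ≤ (P * Wq).rank := Matrix.rank_mul_le_left (P * Wq) Pᵀ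
      _ ≤ Wq.rank := Matrix.rank_mul_le_right P Wq
end

section
/- Let n be a positive integer, r = ⌈n/2⌉, and let W(A_n) be the walk matrix of the Dynkin graph A_n. Then W(A_n) is ℤ-equivalent to the block diagonal matrix with the r×r matrix overline{W(A_n)} in the top-left corner and zeros elsewhere; that is, there exist matrices U, V in GL_n(ℤ) such that U·W(A_n)·V equals overline{W(A_n)} ⊕ O_{n−r}. (Consequently W(A_n) and overline{W(A_n)} ⊕ O_{n−r} have the same Smith normal form.) -/
open Matrix Polynomial Finset

namespace PathWalkAux

variable {n : ℕ}

lemma pathAdj_rev (i j : Fin n) : pathAdj n i.rev j.rev = pathAdj n i j := by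
  have hi := i.isLt; have hj := j.isLt
  simp only [pathAdj, Matrix.of_apply, Fin.val_rev]
  refine if_congr ?_ rfl rfl
  omega

lemma pathAdj_pow_rev (m : ℕ) (i j : Fin n) :
    (pathAdj n ^ m) i.rev j.rev = (pathAdj n ^ m) i j := by
  induction m generalizing i j with
  | zero => simp [Matrix.one_apply, Fin.rev_inj]
  | succ m ih =>
    rw [pow_succ, Matrix.mul_apply, Matrix.mul_apply]
    exact Fintype.sum_equiv (Fin.revPerm) _ _ (fun k => by
      simp only [Fin.revPerm_apply]
      rw [← ih i k.rev, ← pathAdj_rev k.rev j, Fin.rev_rev])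

lemma walk_sym (m : ℕ) (i : Fin n) :
    (pathAdj n ^ m *ᵥ fun _ => (1:ℤ)) i.rev = (pathAdj n ^ m *ᵥ fun _ => (1:ℤ)) i := by
  simp only [Matrix.mulVec, dotProduct]
  exact Fintype.sum_equiv (Fin.revPerm) _ _ (fun k => by
    simp only [Fin.revPerm_apply]
    rw [← pathAdj_pow_rev m i k.rev, Fin.rev_rev])

lemma nat_sum_fold (hn : 0 < n) (g : ℕ → ℤ) :
    ∑ k ∈ range n, g k =
      ∑ j ∈ range ((n+1)/2), (g j + if n - 1 - j = j then 0 else g (n - 1 - j)) := by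
  have hrn : (n+1)/2 ≤ n := by omega
  have hnr : n - (n+1)/2 ≤ (n+1)/2 := by omega
  rw [Finset.sum_add_distrib]
  have h1 : ∑ k ∈ range n, g k
      = (∑ k ∈ range ((n+1)/2), g k) + ∑ k ∈ Ico ((n+1)/2) n, g k := by
    rw [Finset.range_eq_Ico, ← Finset.sum_Ico_consecutive g (Nat.zero_le _) hrn,
      ← Finset.range_eq_Ico]
  rw [h1]
  congr 1
  rw [Finset.sum_Ico_eq_sum_range]
  rw [← Finset.sum_range_add_sum_Ico _ hnr]
  have h0 : ∑ j ∈ Ico (n - (n+1)/2) ((n+1)/2),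
      (if n - 1 - j = j then (0:ℤ) else g (n - 1 - j)) = 0 := by
    refine Finset.sum_eq_zero fun j hj => ?_
    rw [Finset.mem_Ico] at hj
    rw [if_pos (by omega)]
  rw [h0, add_zero]
  rw [← Finset.sum_range_reflect (fun j => g ((n+1)/2 + j)) (n - (n+1)/2)]
  refine Finset.sum_congr rfl fun j hj => ?_
  rw [Finset.mem_range] at hj
  rw [if_neg (by omega)]
  congr 1
  omega

/-- The "folded" path matrix on `⌈n/2⌉` vertices. -/
def foldB (n : ℕ) (hrn : (n+1)/2 ≤ n) : Matrix (Fin ((n+1)/2)) (Fin ((n+1)/2)) ℤ :=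
  Matrix.of fun i j =>
    pathAdj n (Fin.castLE hrn i) (Fin.castLE hrn j) +
      if n - 1 - (j:ℕ) = (j:ℕ) then 0
      else pathAdj n (Fin.castLE hrn i) (Fin.castLE hrn j).rev

lemma fin_sum_fold (hn : 0 < n) (hrn : (n+1)/2 ≤ n) (f : Fin n → ℤ) :
    ∑ k, f k = ∑ j : Fin ((n+1)/2),
      (f (Fin.castLE hrn j) +
        if n - 1 - (j:ℕ) = (j:ℕ) then 0 else f (Fin.castLE hrn j).rev) := by
  classical
  set g : ℕ → ℤ := fun k => if h : k < n then f ⟨k, h⟩ else 0 with hg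
  have hfg : ∀ k : Fin n, f k = g k := fun k => by simp [hg, k.isLt]
  calc ∑ k, f k = ∑ k : Fin n, g k := Finset.sum_congr rfl (fun k _ => hfg k)
    _ = ∑ k ∈ range n, g k := Fin.sum_univ_eq_sum_range g n
    _ = ∑ j ∈ range ((n+1)/2), (g j + if n - 1 - j = j then 0 else g (n-1-j)) :=
        nat_sum_fold hn g
    _ = ∑ j : Fin ((n+1)/2), (g (j:ℕ) + if n - 1 - (j:ℕ) = (j:ℕ) then 0 else g (n-1-(j:ℕ))) :=
        (Fin.sum_univ_eq_sum_range (fun j => g j + if n-1-j = j then 0 else g (n-1-j)) _).symm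
    _ = _ := by
        refine Finset.sum_congr rfl fun j _ => ?_
        congr 1
        · rw [hfg (Fin.castLE hrn j)]; rfl
        · split
          · rfl
          · rw [hfg (Fin.castLE hrn j).rev]
            congr 1
            rw [Fin.val_rev]
            simp only [Fin.coe_castLE]
            omega

lemma fold_mulVec (hn : 0 < n) (hrn : (n+1)/2 ≤ n) (v : Fin n → ℤ)
    (hv : ∀ i, v i.rev = v i) (i : Fin ((n+1)/2)) :
    (pathAdj n *ᵥ v) (Fin.castLE hrn i)
      = (foldB n hrn *ᵥ fun j => v (Fin.castLE hrn j)) i := by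
  simp only [Matrix.mulVec, dotProduct, foldB, Matrix.of_apply]
  rw [fin_sum_fold hn hrn (fun k => pathAdj n (Fin.castLE hrn i) k * v k)]
  refine Finset.sum_congr rfl fun j _ => ?_
  split
  · ring
  · rw [hv (Fin.castLE hrn j)]
    ring

lemma fold_pow (hn : 0 < n) (hrn : (n+1)/2 ≤ n) (m : ℕ) (i : Fin ((n+1)/2)) :
    (pathAdj n ^ m *ᵥ fun _ => (1:ℤ)) (Fin.castLE hrn i)
      = ((foldB n hrn) ^ m *ᵥ fun _ => (1:ℤ)) i := by
  induction m generalizing i with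
  | zero => simp
  | succ m ih =>
    rw [pow_succ', pow_succ', ← Matrix.mulVec_mulVec, ← Matrix.mulVec_mulVec]
    rw [fold_mulVec hn hrn _ (fun k => walk_sym m k) i]
    congr 1
    funext j
    exact ih j

lemma sym_eq_zero (hn : 0 < n) (hrn : (n+1)/2 ≤ n) (v : Fin n → ℤ)
    (hv : ∀ i, v i.rev = v i) (h0 : ∀ i : Fin ((n+1)/2), v (Fin.castLE hrn i) = 0) :
    v = 0 := by
  funext i
  simp only [Pi.zero_apply]
  by_cases h : (i:ℕ) < (n+1)/2
  · have := h0 ⟨(i:ℕ), h⟩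
    have he : Fin.castLE hrn ⟨(i:ℕ), h⟩ = i := by ext; rfl
    rwa [he] at this
  · have h2 : ((i.rev : Fin n) : ℕ) < (n+1)/2 := by
      have := i.isLt; rw [Fin.val_rev]; omega
    have := h0 ⟨((i.rev : Fin n) : ℕ), h2⟩
    have he : Fin.castLE hrn ⟨((i.rev : Fin n) : ℕ), h2⟩ = i.rev := by ext; rfl
    rw [he, hv i] at this
    exact this

end PathWalkAux

/-- `W(A_n)` is ℤ-equivalent to the block diagonal matrix
`overline{W(A_n)} ⊕ O_{n-r}` where `r = ⌈n/2⌉` and `overline{W(A_n)}` is the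
top-left `r × r` submatrix of `W(A_n)`. -/
theorem walkMatrix_pathAdj_equiv_block (n : ℕ) (hn : 0 < n) :
    ∃ U V : Matrix (Fin n) (Fin n) ℤ, IsUnit U.det ∧ IsUnit V.det ∧
      U * walkMatrix (pathAdj n) * V =
        Matrix.of (fun i j : Fin n =>
          if (i : ℕ) < (n + 1) / 2 ∧ (j : ℕ) < (n + 1) / 2 then
            walkMatrix (pathAdj n) i j
          else 0) := by
  classical
  have hrn : (n+1)/2 ≤ n := by omega
  set r : ℕ := (n+1)/2 with hr
  set A : Matrix (Fin n) (Fin n) ℤ := pathAdj n with hA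
  set B : Matrix (Fin r) (Fin r) ℤ := PathWalkAux.foldB n hrn with hB
  set p : Polynomial ℤ := B.charpoly with hp
  set W : Matrix (Fin n) (Fin n) ℤ := walkMatrix A with hW
  have hWapp : ∀ (i j : Fin n), W i j = (A ^ (j:ℕ) *ᵥ fun _ => (1:ℤ)) i := fun i j => rfl
  have hmon : p.Monic := B.charpoly_monic
  have hdeg : p.natDegree = r := by
    rw [hp, Matrix.charpoly_natDegree_eq_dim, Fintype.card_fin]
  -- Cayley–Hamilton for the folded matrix
  have hCH : (∑ k ∈ range r, p.coeff k • B ^ k) + B ^ r = 0 := by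
    have h1 := B.aeval_self_charpoly
    rw [Polynomial.aeval_eq_sum_range, ← hp, hdeg, Finset.sum_range_succ] at h1
    have hc1 : p.coeff r = 1 := by rw [← hdeg]; exact hmon.coeff_natDegree
    rwa [hc1, one_smul] at h1
  have hBr : B ^ r = ∑ k ∈ range r, (-(p.coeff k)) • B ^ k := by
    have h2 : B ^ r = -∑ k ∈ range r, p.coeff k • B ^ k :=
      eq_neg_of_add_eq_zero_right hCH
    rw [h2, ← Finset.sum_neg_distrib]
    exact Finset.sum_congr rfl fun k _ => by rw [neg_smul]
  -- The key linear relation among the columns of the walk matrix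
  have hvec : (A ^ r *ᵥ fun _ => (1:ℤ)) =
      ∑ k ∈ range r, (-(p.coeff k)) • (A ^ k *ᵥ fun _ => (1:ℤ)) := by
    rw [← sub_eq_zero]
    apply PathWalkAux.sym_eq_zero hn hrn
    · intro i
      simp only [Pi.sub_apply, Finset.sum_apply, Pi.smul_apply, smul_eq_mul]
      rw [PathWalkAux.walk_sym]
      congr 1
      exact Finset.sum_congr rfl fun k _ => by rw [PathWalkAux.walk_sym]
    · intro i
      simp only [Pi.sub_apply, Finset.sum_apply, Pi.smul_apply, smul_eq_mul]
      rw [PathWalkAux.fold_pow hn hrn r i]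
      have hterm : ∀ k ∈ range r,
          (-(p.coeff k)) * ((A ^ k *ᵥ fun _ => (1:ℤ)) (Fin.castLE hrn i))
            = (-(p.coeff k)) * ((B ^ k *ᵥ fun _ => (1:ℤ)) i) := fun k _ => by
        rw [PathWalkAux.fold_pow hn hrn]
      rw [Finset.sum_congr rfl hterm, ← hB, hBr]
      have hsum : ∀ (s : Finset ℕ) (M : ℕ → Matrix (Fin r) (Fin r) ℤ) (v : Fin r → ℤ)
          (i : Fin r), ((∑ k ∈ s, M k) *ᵥ v) i = ∑ k ∈ s, (M k *ᵥ v) i := by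
        intro s M v i
        simp only [Matrix.mulVec, dotProduct, Matrix.sum_apply, Finset.sum_mul]
        exact Finset.sum_comm
      rw [hsum, sub_eq_zero]
      exact Finset.sum_congr rfl fun k _ => by
        rw [Matrix.smul_mulVec, Pi.smul_apply, smul_eq_mul]
  have hrel : ∀ (j : ℕ), r ≤ j → ∀ i : Fin n,
      (A ^ j *ᵥ fun _ => (1:ℤ)) i
        = ∑ t ∈ range r, (-(p.coeff t)) * ((A ^ (j - r + t) *ᵥ fun _ => (1:ℤ)) i) := by
    intro j hj i
    have h1 : A ^ j = A ^ (j - r) * A ^ r := by rw [← pow_add]; congr 1; omega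
    have h2 : A ^ (j - r) *ᵥ (∑ k ∈ range r, (-(p.coeff k)) • (A ^ k *ᵥ fun _ => (1:ℤ)))
        = ∑ k ∈ range r, (-(p.coeff k)) • (A ^ (j - r) *ᵥ (A ^ k *ᵥ fun _ => (1:ℤ))) := by
      rw [← Matrix.mulVecLin_apply, map_sum]
      exact Finset.sum_congr rfl fun k _ => by
        rw [LinearMap.map_smul, Matrix.mulVecLin_apply]
    rw [h1, ← Matrix.mulVec_mulVec, hvec, h2, Finset.sum_apply]
    refine Finset.sum_congr rfl fun t _ => ?_
    rw [Matrix.mulVec_mulVec, ← pow_add, Pi.smul_apply, smul_eq_mul]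
  -- the two unimodular matrices
  set E : Matrix (Fin n) (Fin n) ℤ :=
    Matrix.of (fun i j => if r ≤ (i:ℕ) ∧ j = i.rev then (1:ℤ) else 0) with hE
  set F : Matrix (Fin n) (Fin n) ℤ :=
    Matrix.of (fun i j => if r ≤ (j:ℕ) ∧ (j:ℕ) - r ≤ (i:ℕ) ∧ (i:ℕ) < (j:ℕ)
      then -(p.coeff ((i:ℕ) + r - (j:ℕ))) else 0) with hF
  refine ⟨1 - E, 1 - F, ?_, ?_, ?_⟩
  · -- U = 1 - E is lower triangular with unit diagonal
    have ht : (1 - E).BlockTriangular OrderDual.toDual := by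
      intro i j hij
      have hij' : (i:ℕ) < (j:ℕ) := hij
      have hjr := j.isLt
      rw [Matrix.sub_apply, Matrix.one_apply_ne (by exact fun h => by subst h; omega), hE,
        Matrix.of_apply, if_neg, sub_zero]
      rintro ⟨h1, rfl⟩
      rw [Fin.val_rev] at hij'
      omega
    rw [Matrix.det_of_lowerTriangular _ ht]
    have hd : ∀ i : Fin n, (1 - E) i i = 1 := by
      intro i
      have := i.isLt
      rw [Matrix.sub_apply, Matrix.one_apply_eq, hE, Matrix.of_apply, if_neg, sub_zero]
      rintro ⟨h1, h2⟩
      have := congrArg Fin.val h2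
      rw [Fin.val_rev] at this
      omega
    rw [Finset.prod_congr rfl fun i _ => hd i, Finset.prod_const_one]
    exact isUnit_one
  · -- V = 1 - F is upper triangular with unit diagonal
    have ht : (1 - F).BlockTriangular id := by
      intro i j hij
      have hij' : (j:ℕ) < (i:ℕ) := hij
      rw [Matrix.sub_apply, Matrix.one_apply_ne (by exact fun h => by subst h; omega), hF,
        Matrix.of_apply, if_neg, sub_zero]
      rintro ⟨h1, h2, h3⟩
      omega
    rw [Matrix.det_of_upperTriangular ht]
    have hd : ∀ i : Fin n, (1 - F) i i = 1 := by
      intro i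
      rw [Matrix.sub_apply, Matrix.one_apply_eq, hF, Matrix.of_apply, if_neg, sub_zero]
      rintro ⟨h1, h2, h3⟩
      omega
    rw [Finset.prod_congr rfl fun i _ => hd i, Finset.prod_const_one]
    exact isUnit_one
  · -- the main computation
    have hUW : ∀ i j : Fin n, ((1 - E) * W) i j = if (i:ℕ) < r then W i j else 0 := by
      intro i j
      rw [Matrix.sub_mul, Matrix.one_mul, Matrix.sub_apply]
      have hEW : (E * W) i j = if r ≤ (i:ℕ) then W i j else 0 := by
        rw [Matrix.mul_apply]
        by_cases hri : r ≤ (i:ℕ)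
        · rw [if_pos hri]
          have hterm : ∀ k : Fin n, E i k * W k j
              = if k = i.rev then W i.rev j else 0 := by
            intro k
            rw [hE, Matrix.of_apply]
            by_cases hk : k = i.rev
            · rw [if_pos ⟨hri, hk⟩, if_pos hk, hk, one_mul]
            · rw [if_neg (by tauto), if_neg hk, zero_mul]
          rw [Finset.sum_congr rfl fun k _ => hterm k, Finset.sum_ite_eq']
          rw [if_pos (Finset.mem_univ _)]
          rw [hWapp, hWapp, PathWalkAux.walk_sym]
        · rw [if_neg hri]
          refine Finset.sum_eq_zero fun k _ => ?_
          rw [hE, Matrix.of_apply, if_neg (by tauto), zero_mul]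
      rw [hEW]
      by_cases hri : r ≤ (i:ℕ)
      · rw [if_pos hri, if_neg (by omega), sub_self]
      · rw [if_neg hri, if_pos (by omega), sub_zero]
    have hWFlow : ∀ (i j : Fin n), (j:ℕ) < r → (W * F) i j = 0 := by
      intro i j hj
      rw [Matrix.mul_apply]
      refine Finset.sum_eq_zero fun k _ => ?_
      rw [hF, Matrix.of_apply, if_neg (by omega), mul_zero]
    have hWF : ∀ (i j : Fin n), r ≤ (j:ℕ) → (W * F) i j = W i j := by
      intro i j hj
      have hjn := j.isLt
      set G : ℕ → ℤ := fun m => if h : m < n then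
          (if (j:ℕ) - r ≤ m ∧ m < (j:ℕ) then W i ⟨m, h⟩ * (-(p.coeff (m + r - (j:ℕ)))) else 0)
        else 0 with hG
      have hterm : ∀ k : Fin n, W i k * F k j = G (k:ℕ) := by
        intro k
        rw [hG]
        simp only [k.isLt, dif_pos]
        rw [hF, Matrix.of_apply]
        by_cases hk : (j:ℕ) - r ≤ (k:ℕ) ∧ (k:ℕ) < (j:ℕ)
        · rw [if_pos ⟨hj, hk.1, hk.2⟩, if_pos hk]
        · rw [if_neg (by tauto), if_neg hk, mul_zero]
      rw [Matrix.mul_apply, Finset.sum_congr rfl fun k _ => hterm k,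
        Fin.sum_univ_eq_sum_range]
      have hsub : ∑ m ∈ range n, G m = ∑ m ∈ Ico ((j:ℕ) - r) (j:ℕ), G m := by
        refine (Finset.sum_subset ?_ ?_).symm
        · intro x hx
          rw [Finset.mem_Ico] at hx
          rw [Finset.mem_range]
          omega
        · intro x hx hnx
          rw [Finset.mem_range] at hx
          rw [Finset.mem_Ico] at hnx
          rw [hG]
          simp only [hx, dif_pos]
          rw [if_neg (by omega)]
      rw [hsub, Finset.sum_Ico_eq_sum_range]
      have hcard : (j:ℕ) - ((j:ℕ) - r) = r := by omega
      rw [hcard, hWapp, hrel (j:ℕ) hj i]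
      refine Finset.sum_congr rfl fun t ht => ?_
      rw [Finset.mem_range] at ht
      have hlt : (j:ℕ) - r + t < n := by omega
      rw [hG]
      simp only [hlt, dif_pos]
      rw [if_pos (by omega)]
      have hco : (j:ℕ) - r + t + r - (j:ℕ) = t := by omega
      rw [hco, hWapp, mul_comm]
    ext i j
    have hsplit : (1 - E) * W * (1 - F) = ((1 - E) * W) - ((1 - E) * W) * F := by
      rw [Matrix.mul_sub, Matrix.mul_one]
    rw [hsplit, Matrix.sub_apply, Matrix.of_apply]
    have hUWF : (((1 - E) * W) * F) i j = if (i:ℕ) < r then (W * F) i j else 0 := by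
      rw [Matrix.mul_apply, Matrix.mul_apply]
      by_cases hi : (i:ℕ) < r
      · rw [if_pos hi]
        refine Finset.sum_congr rfl fun k _ => ?_
        rw [hUW i k, if_pos hi]
      · rw [if_neg hi]
        refine Finset.sum_eq_zero fun k _ => ?_
        rw [hUW i k, if_neg hi, zero_mul]
    rw [hUW i j, hUWF]
    by_cases hi : (i:ℕ) < r
    · rw [if_pos hi, if_pos hi]
      by_cases hj : (j:ℕ) < r
      · rw [hWFlow i j hj, sub_zero, if_pos ⟨hi, hj⟩]
      · rw [hWF i j (by omega), if_neg (by tauto), sub_self]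
    · rw [if_neg hi, if_neg hi, sub_zero, if_neg (by tauto)]
end

section
/- Let M be a real m×m matrix and let ξ_1, ..., ξ_m be m linearly independent eigenvectors of the transpose M^T corresponding to eigenvalues λ_1, ..., λ_m respectively (so M is diagonalizable over ℝ). Then det W(M) = (∏_{1 ≤ k < j ≤ m} (λ_j − λ_k)) · (∏_{j=1}^{m} e_m^T ξ_j) / det[ξ_1 ξ_2 ⋯ ξ_m]. -/
open Matrix

/-- If `ξ₁, …, ξ_m` are linearly independent eigenvectors of `Mᵀ` with
eigenvalues `λ₁, …, λ_m`, then
`det W(M) = (∏_{k<j} (λ_j − λ_k)) ⬝ (∏_j eᵀ ξ_j) / det [ξ₁ ⋯ ξ_m]`. -/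
theorem det_walkMatrix_formula (m : ℕ) (hm : 0 < m) (M : Matrix (Fin m) (Fin m) ℝ)
    (ξ : Fin m → Fin m → ℝ) (lam : Fin m → ℝ)
    (hli : LinearIndependent ℝ ξ)
    (heig : ∀ j, Mᵀ *ᵥ ξ j = lam j • ξ j) :
    (walkMatrix M).det =
      (∏ j : Fin m, ∏ k ∈ Finset.Iio j, (lam j - lam k)) * (∏ j : Fin m, ∑ i : Fin m, ξ j i) /
        (Matrix.of fun i j : Fin m => ξ j i).det := by
  set A : Matrix (Fin m) (Fin m) ℝ := Matrix.of fun j i => ξ j i with hA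
  have hpow : ∀ (j : Fin m) (k : ℕ), (Mᵀ) ^ k *ᵥ ξ j = (lam j ^ k) • ξ j := by
    intro j k
    induction k with
    | zero => simp
    | succ n ih =>
      rw [pow_succ', ← mulVec_mulVec, ih, mulVec_smul, heig, smul_smul, ← pow_succ]
  have key : A * walkMatrix M =
      Matrix.diagonal (fun j => ∑ i, ξ j i) * Matrix.vandermonde lam := by
    ext j k
    have : (A * walkMatrix M) j k = ξ j ⬝ᵥ (M ^ (k : ℕ) *ᵥ fun _ => (1 : ℝ)) := by
      simp [hA, Matrix.mul_apply, walkMatrix, dotProduct]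
    rw [this, dotProduct_mulVec, ← mulVec_transpose, Matrix.transpose_pow, hpow]
    simp [dotProduct, Matrix.mul_apply, Matrix.diagonal, Matrix.vandermonde,
      Finset.mul_sum, Finset.sum_mul, mul_comm]
  have hAdet : A.det ≠ 0 := by
    have : IsUnit A := Matrix.linearIndependent_rows_iff_isUnit.mp (by simpa [hA] using hli)
    simpa [Matrix.isUnit_iff_isUnit_det, isUnit_iff_ne_zero] using this
  have hdet := congrArg Matrix.det key
  rw [Matrix.det_mul, Matrix.det_mul, Matrix.det_diagonal, Matrix.det_vandermonde] at hdet
  have hswap : (∏ i : Fin m, ∏ j ∈ Finset.Ioi i, (lam j - lam i)) =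
      ∏ j : Fin m, ∏ k ∈ Finset.Iio j, (lam j - lam k) := by
    rw [Finset.prod_sigma', Finset.prod_sigma']
    apply Finset.prod_nbij' (fun p => ⟨p.2, p.1⟩) (fun p => ⟨p.2, p.1⟩) <;>
      simp [Finset.mem_sigma, Finset.mem_Ioi, Finset.mem_Iio]
  have hAdet' : (Matrix.of fun i j : Fin m => ξ j i).det = A.det := by
    rw [hA, ← Matrix.det_transpose]; rfl
  rw [hAdet']
  field_simp
  rw [mul_comm, hdet, hswap]; ring
end

section
/- Let M be a real m×m matrix and let ξ_1, ..., ξ_m be m linearly independent eigenvectors of the transpose M^T corresponding to pairwise distinct eigenvalues λ_1, ..., λ_m respectively. Then the rank of the walk matrix W(M) equals the number of indices j ∈ {1, ..., m} such that e_m^T ξ_j ≠ 0. -/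
open Matrix

lemma pow_eig {m : ℕ} (M : Matrix (Fin m) (Fin m) ℝ) (ξ : Fin m → Fin m → ℝ)
    (lam : Fin m → ℝ) (heig : ∀ j, Mᵀ *ᵥ ξ j = lam j • ξ j) (j : Fin m) (k : ℕ) :
    (Mᵀ) ^ k *ᵥ ξ j = (lam j ^ k) • ξ j := by
  induction k with
  | zero => simp
  | succ k ih =>
    rw [pow_succ, ← Matrix.mulVec_mulVec, heig, Matrix.mulVec_smul, ih, smul_smul,
      pow_succ]
    ring_nf

/-- If `ξ₁, …, ξ_m` are linearly independent eigenvectors of `Mᵀ` with pairwise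
distinct eigenvalues, then `rank W(M)` is the number of `j` with `eᵀ ξ_j ≠ 0`. -/
theorem rank_walkMatrix_eq_card (m : ℕ) (hm : 0 < m) (M : Matrix (Fin m) (Fin m) ℝ)
    (ξ : Fin m → Fin m → ℝ) (lam : Fin m → ℝ)
    (hli : LinearIndependent ℝ ξ)
    (heig : ∀ j, Mᵀ *ᵥ ξ j = lam j • ξ j)
    (hdist : Function.Injective lam) :
    (walkMatrix M).rank = Set.ncard {j : Fin m | ∑ i : Fin m, ξ j i ≠ 0} := by
  set S : Matrix (Fin m) (Fin m) ℝ := Matrix.of fun j i => ξ j i with hSdef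
  set c : Fin m → ℝ := fun j => ∑ i, ξ j i with hc
  have hS : IsUnit S := Matrix.linearIndependent_rows_iff_isUnit.mp hli
  have hV : IsUnit (Matrix.vandermonde lam).det := by
    rw [Matrix.det_vandermonde]
    refine isUnit_iff_ne_zero.mpr (Finset.prod_ne_zero_iff.mpr fun i _ =>
      Finset.prod_ne_zero_iff.mpr fun j hj =>
        sub_ne_zero.mpr fun h => (Finset.mem_Ioi.mp hj).ne' (hdist h))
  have key : S * walkMatrix M = Matrix.diagonal c * Matrix.vandermonde lam := by
    ext j k
    have h1 := congrArg (fun v => ∑ l, v l) (pow_eig M ξ lam heig j k)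
    rw [← Matrix.transpose_pow] at h1
    simp only [Matrix.mulVec, dotProduct, Matrix.transpose_apply,
      Pi.smul_apply, smul_eq_mul] at h1
    simp only [Matrix.mul_apply, hSdef, Matrix.of_apply, walkMatrix, Matrix.mulVec,
      dotProduct, Matrix.vandermonde, mul_one, Matrix.diagonal_apply]
    have hR : ∑ x, (if j = x then c j else 0) * lam x ^ (k : ℕ)
        = c j * lam j ^ (k : ℕ) := by
      simp [ite_mul]
    rw [hR]
    simp_rw [Finset.mul_sum]
    rw [Finset.sum_comm]
    calc ∑ l, ∑ i, ξ j i * (M ^ (k : ℕ)) i l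
        = ∑ l, ∑ i, (M ^ (k : ℕ)) i l * ξ j i :=
          Finset.sum_congr rfl fun l _ => Finset.sum_congr rfl fun i _ => mul_comm _ _
      _ = ∑ l, lam j ^ (k : ℕ) * ξ j l := h1
      _ = c j * lam j ^ (k : ℕ) := by rw [← Finset.mul_sum, hc]; ring
  have h2 : (walkMatrix M).rank = (Matrix.diagonal c).rank := by
    have := Matrix.rank_mul_eq_right_of_isUnit_det S (walkMatrix M)
      (hS.map (Matrix.detMonoidHom (n := Fin m) (R := ℝ)))
    rw [← this, key, Matrix.rank_mul_eq_left_of_isUnit_det _ _ hV]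
  rw [h2, Matrix.rank_diagonal]
  rw [← Nat.card_coe_set_eq, Nat.card_eq_fintype_card]
  rfl
end

section
/- Let r be a positive integer and for 1 ≤ k ≤ r set α_k = 2kπ/(2r+1). Define the real vector v_k of dimension r by (v_k)_j = (−1)^{r−j}·(1 + Σ_{i=1}^{r−j} 2cos(i·α_k)) for j = 1, ..., r. Then ∏_{k=1}^{r} (e_r^T v_k) = (−1)^{⌊r/2⌋}, where e_r^T v_k denotes the sum of the entries of v_k. -/
open Matrix Real

private lemma lemA (θ : ℝ) (m : ℕ) :
    Real.sin θ * (1 + ∑ i ∈ Finset.Icc 1 m, 2 * Real.cos (i * (2 * θ))) =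
      Real.sin ((2 * m + 1) * θ) := by
  induction m with
  | zero => simp
  | succ n ih =>
    rw [Finset.sum_Icc_succ_top (by omega)]
    push_cast
    have h := Real.sin_sub_sin ((2 * ((n : ℝ) + 1) + 1) * θ) ((2 * n + 1) * θ)
    have e1 : ((2 * ((n : ℝ) + 1) + 1) * θ - (2 * n + 1) * θ) / 2 = θ := by ring
    have e2 : ((2 * ((n : ℝ) + 1) + 1) * θ + (2 * n + 1) * θ) / 2 = ((n : ℝ) + 1) * (2 * θ) := by
      ring
    rw [e1, e2] at h
    linear_combination ih - h

private lemma lemB (θ : ℝ) (r : ℕ) :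
    2 * Real.cos θ * ∑ m ∈ Finset.range r, (-1 : ℝ) ^ m * Real.sin ((2 * m + 1) * θ) =
      (-1) ^ (r + 1) * Real.sin (2 * r * θ) := by
  induction r with
  | zero => simp
  | succ n ih =>
    rw [Finset.sum_range_succ]
    push_cast
    have key := Real.sin_sub_sin (2 * ((n : ℝ) + 1) * θ) (-(2 * n * θ))
    have e1 : (2 * ((n : ℝ) + 1) * θ - -(2 * n * θ)) / 2 = (2 * n + 1) * θ := by ring
    have e2 : (2 * ((n : ℝ) + 1) * θ + -(2 * n * θ)) / 2 = θ := by ring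
    rw [e1, e2, Real.sin_neg] at key
    linear_combination ih - (-1 : ℝ) ^ n * key

private lemma sinpos {r k : ℕ} (hk : k ∈ Finset.Icc 1 r) :
    0 < Real.sin ((k : ℝ) * Real.pi / (2 * r + 1)) := by
  rw [Finset.mem_Icc] at hk
  have hπ := Real.pi_pos
  have hk1 : (1 : ℝ) ≤ (k : ℝ) := by exact_mod_cast hk.1
  have hk2 : (k : ℝ) ≤ r := by exact_mod_cast hk.2
  have h1 : (0 : ℝ) < (k : ℝ) * Real.pi / (2 * r + 1) := by
    apply div_pos (by nlinarith) (by positivity)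
  have h2 : (k : ℝ) * Real.pi / (2 * r + 1) < Real.pi := by
    rw [div_lt_iff₀ (by positivity)]
    nlinarith
  exact Real.sin_pos_of_pos_of_lt_pi h1 h2

private lemma cospos {r k : ℕ} (hk : k ∈ Finset.Icc 1 r) :
    0 < Real.cos ((k : ℝ) * Real.pi / (2 * r + 1)) := by
  rw [Finset.mem_Icc] at hk
  have hπ := Real.pi_pos
  have hk1 : (1 : ℝ) ≤ (k : ℝ) := by exact_mod_cast hk.1
  have hk2 : (k : ℝ) ≤ r := by exact_mod_cast hk.2
  have hd : (0 : ℝ) < 2 * r + 1 := by positivity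
  refine Real.cos_pos_of_mem_Ioo ⟨?_, ?_⟩
  · have : (0 : ℝ) < (k : ℝ) * Real.pi / (2 * r + 1) := by
      apply div_pos (by nlinarith) hd
    linarith
  · rw [div_lt_iff₀ hd]
    nlinarith

private lemma prodsin (r : ℕ) :
    ∏ k ∈ Finset.Icc 1 r, Real.sin (2 * k * Real.pi / (2 * r + 1)) =
      ∏ k ∈ Finset.Icc 1 r, Real.sin (k * Real.pi / (2 * r + 1)) := by
  refine Finset.prod_nbij' (fun k => if 2 * k ≤ r then 2 * k else 2 * r + 1 - 2 * k)
    (fun m => if m % 2 = 0 then m / 2 else (2 * r + 1 - m) / 2) ?_ ?_ ?_ ?_ ?_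
  · intro a ha; rw [Finset.mem_Icc] at *; split_ifs <;> omega
  · intro a ha; rw [Finset.mem_Icc] at *; split_ifs <;> omega
  · intro a ha; rw [Finset.mem_Icc] at ha; split_ifs <;> omega
  · intro a ha; rw [Finset.mem_Icc] at ha; split_ifs <;> omega
  · intro a ha
    rw [Finset.mem_Icc] at ha
    split_ifs with h
    · push_cast; ring_nf
    · have hc : ((2 * r + 1 - 2 * a : ℕ) : ℝ) = 2 * r + 1 - 2 * a := by
        push_cast [Nat.cast_sub (by omega : 2 * a ≤ 2 * r + 1)]; ring
      rw [hc]
      have he : ((2 * (r:ℝ) + 1) - 2 * a) * Real.pi / (2 * r + 1) =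
          Real.pi - 2 * a * Real.pi / (2 * r + 1) := by
        have : (2 * (r:ℝ) + 1) ≠ 0 := by positivity
        field_simp
      rw [he, Real.sin_pi_sub]

private lemma lemC {r k : ℕ} (hk : k ∈ Finset.Icc 1 r) :
    (∑ j : Fin r, ((-1 : ℝ)) ^ (r - 1 - (j : ℕ)) *
        (1 + ∑ i ∈ Finset.Icc 1 (r - 1 - (j : ℕ)),
          2 * Real.cos (i * (2 * k * Real.pi / (2 * r + 1))))) =
      (-1) ^ (r + k) / (2 * Real.cos ((k : ℝ) * Real.pi / (2 * r + 1))) := by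
  set θ : ℝ := (k : ℝ) * Real.pi / (2 * r + 1) with hθ
  have hang : 2 * (k : ℝ) * Real.pi / (2 * r + 1) = 2 * θ := by rw [hθ]; ring
  have hsin := sinpos hk
  have hcos := cospos hk
  rw [Finset.mem_Icc] at hk
  have hS : (∑ j : Fin r, ((-1 : ℝ)) ^ (r - 1 - (j : ℕ)) *
        (1 + ∑ i ∈ Finset.Icc 1 (r - 1 - (j : ℕ)),
          2 * Real.cos (i * (2 * k * Real.pi / (2 * r + 1))))) =
      ∑ m ∈ Finset.range r, (-1 : ℝ) ^ m *
        (1 + ∑ i ∈ Finset.Icc 1 m, 2 * Real.cos (i * (2 * θ))) := by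
    simp only [hang]
    rw [Fin.sum_univ_eq_sum_range (fun m => ((-1 : ℝ)) ^ (r - 1 - m) *
        (1 + ∑ i ∈ Finset.Icc 1 (r - 1 - m), 2 * Real.cos (i * (2 * θ)))) r,
      Finset.sum_range_reflect (fun m => ((-1 : ℝ)) ^ m *
        (1 + ∑ i ∈ Finset.Icc 1 m, 2 * Real.cos (i * (2 * θ)))) r]
  rw [hS]
  set S := ∑ m ∈ Finset.range r, (-1 : ℝ) ^ m *
      (1 + ∑ i ∈ Finset.Icc 1 m, 2 * Real.cos (i * (2 * θ))) with hSdef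
  have h1 : Real.sin θ * S =
      ∑ m ∈ Finset.range r, (-1 : ℝ) ^ m * Real.sin ((2 * m + 1) * θ) := by
    rw [hSdef, Finset.mul_sum]
    refine Finset.sum_congr rfl fun m _ => ?_
    rw [← lemA θ m]; ring
  have h2 := lemB θ r
  have h3 : 2 * (r : ℝ) * θ = (k : ℝ) * Real.pi - θ := by
    rw [hθ]
    have : (2 * (r:ℝ) + 1) ≠ 0 := by positivity
    field_simp; ring
  have h4 : Real.sin (2 * (r : ℝ) * θ) = -((-1) ^ k * Real.sin θ) := by
    rw [h3]; exact Real.sin_nat_mul_pi_sub θ k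
  have h5 : 2 * Real.cos θ * (Real.sin θ * S) = (-1) ^ (r + k) * Real.sin θ := by
    rw [h1, h2, h4, pow_add]; ring
  rw [eq_div_iff (by positivity : (2 : ℝ) * Real.cos θ ≠ 0)]
  apply mul_left_cancel₀ hsin.ne'
  linear_combination h5

/-- With `α_k = 2kπ/(2r+1)` and `v_k` the vector whose (1-indexed) `j`-th entry
is `(−1)^{r−j} (1 + Σ_{i=1}^{r−j} 2 cos(i α_k))`, the product of the entry sums
`∏_{k=1}^{r} eᵀ v_k` equals `(−1)^{⌊r/2⌋}`. -/
theorem prod_entrySum_v_eq (r : ℕ) (hr : 0 < r) :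
    ∏ k ∈ Finset.Icc 1 r,
        (∑ j : Fin r, ((-1 : ℝ)) ^ (r - 1 - (j : ℕ)) *
          (1 + ∑ i ∈ Finset.Icc 1 (r - 1 - (j : ℕ)),
            2 * Real.cos (i * (2 * k * Real.pi / (2 * r + 1))))) =
      (-1) ^ (r / 2) := by
  rw [Finset.prod_congr rfl (fun k hk => lemC hk), Finset.prod_div_distrib]
  have hcosprod : ∏ k ∈ Finset.Icc 1 r,
      (2 * Real.cos ((k : ℝ) * Real.pi / (2 * r + 1))) = 1 := by
    have hne : (∏ k ∈ Finset.Icc 1 r, Real.sin ((k : ℝ) * Real.pi / (2 * r + 1))) ≠ 0 :=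
      (Finset.prod_pos fun k hk => sinpos hk).ne'
    apply mul_right_cancel₀ hne
    rw [← Finset.prod_mul_distrib, one_mul]
    rw [Finset.prod_congr rfl (fun k (hk : k ∈ Finset.Icc 1 r) => ?_), prodsin r]
    show 2 * Real.cos ((k : ℝ) * Real.pi / (2 * r + 1)) *
        Real.sin ((k : ℝ) * Real.pi / (2 * r + 1)) = Real.sin (2 * k * Real.pi / (2 * r + 1))
    rw [show 2 * (k : ℝ) * Real.pi / (2 * r + 1) =
        2 * ((k : ℝ) * Real.pi / (2 * r + 1)) by ring, Real.sin_two_mul]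
    ring
  have hsign : ∏ k ∈ Finset.Icc 1 r, ((-1 : ℝ)) ^ (r + k) = (-1) ^ (r / 2) := by
    rw [Finset.prod_pow_eq_pow_sum]
    have h6 : (∑ k ∈ Finset.Icc 1 r, (r + k)) =
        r * r + r + ∑ i ∈ Finset.range r, i := by
      rw [← Finset.Ico_add_one_right_eq_Icc, Finset.sum_Ico_eq_sum_range]
      norm_num
      rw [Finset.sum_congr rfl (fun i _ => show r + (1 + i) = (r + 1) + i by omega),
        Finset.sum_add_distrib, Finset.sum_const, Finset.card_range, smul_eq_mul]
      ring
    have hg := Finset.sum_range_id_mul_two r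
    have ha : r * (r - 1) = r * r - r := by
      cases r with
      | zero => rfl
      | succ n => simp [Nat.succ_sub_one, Nat.mul_succ]
    have hra : r ≤ r * r := Nat.le_mul_of_pos_left r hr
    have ha4 : (r % 2 = 0 → (r * r) % 4 = 0) ∧ (r % 2 = 1 → (r * r) % 4 = 1) := by
      have hm := Nat.mul_mod r r 4
      have : r % 4 = 0 ∨ r % 4 = 1 ∨ r % 4 = 2 ∨ r % 4 = 3 := by omega
      rcases this with h | h | h | h <;> rw [h] at hm <;> omega
    obtain ⟨c, hc⟩ : ∃ c, (∑ k ∈ Finset.Icc 1 r, (r + k)) = r / 2 + 2 * c := by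
      refine ⟨((∑ k ∈ Finset.Icc 1 r, (r + k)) - r / 2) / 2, ?_⟩
      rw [h6] at *
      omega
    rw [hc, pow_add, pow_mul, neg_one_sq, one_pow, mul_one]
  rw [hsign, hcosprod, div_one]
end

section
/- Let q be a positive integer and let θ_1, ..., θ_q be real numbers. Let C be the q×q real matrix whose first row is all ones and whose (i, j)-entry for 2 ≤ i ≤ q is 2cos((i−1)θ_j). Then det C = ∏_{1 ≤ j < i ≤ q} (2cos θ_i − 2cos θ_j). -/
open Matrix Real Polynomial

lemma dickson11_natDegree : ∀ n : ℕ, (Polynomial.dickson 1 (1 : ℝ) n).natDegree = n ∧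
    (1 ≤ n → (Polynomial.dickson 1 (1 : ℝ) n).Monic)
  | 0 => by
      rw [Polynomial.dickson_zero]
      norm_num
  | 1 => by
      rw [Polynomial.dickson_one]
      exact ⟨Polynomial.natDegree_X, fun _ => Polynomial.monic_X⟩
  | (n + 2) => by
      obtain ⟨hd1, _⟩ := dickson11_natDegree n
      obtain ⟨hd2, hm2⟩ := dickson11_natDegree (n + 1)
      have hm2' := hm2 (by omega)
      rw [Polynomial.dickson_add_two]
      have hX : (X * Polynomial.dickson 1 (1 : ℝ) (n + 1)).Monic :=
        Polynomial.monic_X.mul hm2'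
      have hXdeg : (X * Polynomial.dickson 1 (1 : ℝ) (n + 1)).natDegree = n + 2 := by
        rw [Polynomial.natDegree_X_mul (hm2'.ne_zero), hd2]
      have key : (X * Polynomial.dickson 1 (1 : ℝ) (n + 1) -
          C (1 : ℝ) * Polynomial.dickson 1 (1 : ℝ) n).Monic := by
        apply Polynomial.Monic.sub_of_left hX
        rw [Polynomial.degree_eq_natDegree hX.ne_zero, hXdeg]
        calc (C (1 : ℝ) * Polynomial.dickson 1 (1 : ℝ) n).degree
            ≤ (Polynomial.dickson 1 (1 : ℝ) n).degree :=
              Polynomial.degree_mul_le _ _ |>.trans (by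
                simp [Polynomial.degree_C (one_ne_zero)])
          _ ≤ ((n : ℕ) : WithBot ℕ) := Polynomial.degree_le_natDegree.trans (by rw [hd1])
          _ < ((n + 2 : ℕ) : WithBot ℕ) := by
              exact_mod_cast (by omega : n < n + 2)
      refine ⟨?_, fun _ => key⟩
      rw [Polynomial.natDegree_sub_eq_left_of_natDegree_lt, hXdeg]
      rw [hXdeg]
      calc (C (1 : ℝ) * Polynomial.dickson 1 (1 : ℝ) n).natDegree
          ≤ (Polynomial.dickson 1 (1 : ℝ) n).natDegree := by
            simpa using Polynomial.natDegree_mul_le (p := C (1 : ℝ))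
              (q := Polynomial.dickson 1 (1 : ℝ) n)
        _ < n + 2 := by rw [hd1]; omega

lemma dickson11_eval_cos (θ : ℝ) : ∀ n : ℕ,
    (Polynomial.dickson 1 (1 : ℝ) n).eval (2 * Real.cos θ) = 2 * Real.cos (n * θ)
  | 0 => by norm_num [Polynomial.dickson_zero]
  | 1 => by simp [Polynomial.dickson_one]
  | (n + 2) => by
      rw [Polynomial.dickson_add_two]
      simp only [Polynomial.eval_sub, Polynomial.eval_mul, Polynomial.eval_X,
        Polynomial.eval_C, one_mul, dickson11_eval_cos θ n, dickson11_eval_cos θ (n + 1)]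
      have h1 : ((n + 2 : ℕ) : ℝ) * θ = ((n + 1 : ℕ) : ℝ) * θ + θ := by push_cast; ring
      have h2 : ((n : ℕ) : ℝ) * θ = ((n + 1 : ℕ) : ℝ) * θ - θ := by push_cast; ring
      rw [h1, h2, Real.cos_add, Real.cos_sub]
      ring

lemma prod_Ioi_swap {M : Type*} [CommMonoid M] {n : ℕ} (g : Fin n → Fin n → M) :
    ∏ i, ∏ j ∈ Finset.Ioi i, g i j = ∏ i, ∏ j ∈ Finset.Iio i, g j i := by
  rw [Finset.prod_sigma', Finset.prod_sigma']
  refine Finset.prod_nbij' (fun p ↦ ⟨p.2, p.1⟩) (fun p ↦ ⟨p.2, p.1⟩) ?_ ?_ ?_ ?_ ?_ <;> simp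

/-- The determinant of the matrix whose first row is all ones and whose
(1-indexed) `(i, j)`-entry for `i ≥ 2` is `2 cos((i−1) θ_j)` equals
`∏_{j < i} (2 cos θ_i − 2 cos θ_j)`. -/
theorem det_cos_vandermonde (q : ℕ) (hq : 0 < q) (θ : Fin q → ℝ) :
    (Matrix.of fun i j : Fin q =>
        if (i : ℕ) = 0 then (1 : ℝ) else 2 * Real.cos ((i : ℕ) * θ j)).det =
      ∏ i : Fin q, ∏ j ∈ Finset.Iio i, (2 * Real.cos (θ i) - 2 * Real.cos (θ j)) := by
  set p : Fin q → ℝ[X] := fun i => if (i : ℕ) = 0 then 1 else Polynomial.dickson 1 1 i with hp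
  have hdeg : ∀ i : Fin q, (p i).natDegree = i := by
    intro i
    by_cases h : (i : ℕ) = 0 <;> simp [hp, h, (dickson11_natDegree (i : ℕ)).1]
  have hmonic : ∀ i : Fin q, (p i).Monic := by
    intro i
    by_cases h : (i : ℕ) = 0
    · simp [hp, h, Polynomial.monic_one]
    · simpa [hp, h] using (dickson11_natDegree (i : ℕ)).2 (by omega)
  have heval : ∀ i j : Fin q, (p i).eval (2 * Real.cos (θ j)) =
      if (i : ℕ) = 0 then (1 : ℝ) else 2 * Real.cos ((i : ℕ) * θ j) := by
    intro i j
    by_cases h : (i : ℕ) = 0 <;> simp [hp, h, dickson11_eval_cos (θ j) (i : ℕ)]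
  have key := Matrix.det_eval_matrixOfPolynomials_eq_det_vandermonde
    (fun i : Fin q => 2 * Real.cos (θ i)) p hdeg hmonic
  have hT : (Matrix.of fun i j : Fin q =>
      if (i : ℕ) = 0 then (1 : ℝ) else 2 * Real.cos ((i : ℕ) * θ j)) =
      (Matrix.of fun i j : Fin q => (p j).eval (2 * Real.cos (θ i)))ᵀ := by
    ext i j
    simp [Matrix.transpose_apply, heval i j]
  rw [hT, Matrix.det_transpose, ← key, Matrix.det_vandermonde,
    prod_Ioi_swap (fun i j => 2 * Real.cos (θ j) - 2 * Real.cos (θ i))]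
end

section
/- Let r be a positive integer and for 1 ≤ k ≤ r set α_k = 2kπ/(2r+1) and λ_k = −2cos α_k. Define the real vector v_k of dimension r by (v_k)_j = (−1)^{r−j}·(1 + Σ_{i=1}^{r−j} 2cos(i·α_k)) for j = 1, ..., r. Then det[v_1 v_2 ⋯ v_r] = (−1)^{⌊r/2⌋} · ∏_{1 ≤ j < i ≤ r} (λ_i − λ_j). -/
open Matrix Real

section AuxB1

open Polynomial Finset Equiv

/-- Reversal decomposition for permutation sign computation. -/
lemma revPerm_decomp_B1 (n : ℕ) :
    (Fin.revPerm : Equiv.Perm (Fin (n+1))) =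
      Equiv.Perm.decomposeFin.symm (Fin.last n, Fin.revPerm * finRotate n) := by
  ext i
  refine Fin.cases ?_ (fun x => ?_) i
  · simp [Fin.ext_iff, Fin.val_rev]
  · rw [Equiv.Perm.decomposeFin_symm_apply_succ]
    rcases Nat.eq_zero_or_pos n with rfl | hn
    · exact absurd x.2 (by omega)
    obtain ⟨m, rfl⟩ := Nat.exists_eq_succ_of_ne_zero (Nat.pos_iff_ne_zero.mp hn)
    simp only [Fin.revPerm_apply, Equiv.Perm.mul_apply, finRotate_succ_apply]
    rcases eq_or_ne x (Fin.last m) with rfl | hx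
    · have h1 : (Fin.last m + 1 : Fin (m+1)) = 0 := by
        simp [Fin.ext_iff, Fin.add_def]
      rw [h1]
      have h2 : ((0 : Fin (m+1)).rev).succ = Fin.last (m+1) := by
        simp [Fin.ext_iff, Fin.val_rev]
      rw [h2, Equiv.swap_apply_right]
      simp [Fin.ext_iff, Fin.val_rev]
    · have hx2 : (x : ℕ) < m + 1 := x.2
      have hxm' : (x : ℕ) ≠ m := fun h => hx (Fin.ext (by simp [h, Fin.last]))
      have h1 : ((x + 1 : Fin (m+1)) : ℕ) = (x : ℕ) + 1 :=
        Fin.val_add_one_of_lt ((Fin.le_last x).lt_of_ne hx)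
      have h2 : (((x+1 : Fin (m+1)).rev).succ : ℕ) = m - (x:ℕ) := by
        rw [Fin.val_succ, Fin.val_rev, h1]; omega
      rw [Equiv.swap_apply_of_ne_of_ne]
      · rw [h2, Fin.val_rev, Fin.val_succ]; omega
      · rw [Ne, Fin.ext_iff, h2, Fin.val_zero]; omega
      · rw [Ne, Fin.ext_iff, h2, Fin.val_last]; omega

/-- The sign of the order-reversing permutation of `Fin n` is `(-1)^(n/2)`. -/
lemma sign_revPerm_B1 : ∀ n : ℕ, Equiv.Perm.sign (Fin.revPerm : Equiv.Perm (Fin n)) = (-1) ^ (n / 2)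
  | 0 => by decide
  | 1 => by decide
  | (n+2) => by
    rw [revPerm_decomp_B1 (n+1),
      Equiv.Perm.decomposeFin.symm_sign,
      if_neg (by simp [Fin.ext_iff, Fin.last]),
      _root_.map_mul, sign_revPerm_B1 (n+1), sign_finRotate]
    rcases Nat.even_or_odd n with ⟨k, rfl⟩ | ⟨k, rfl⟩
    · have e1 : (k+k+1)/2 = k := by omega
      have e2 : (k+k+2)/2 = k+1 := by omega
      rw [e1, e2]
      have : ((-1 : ℤˣ)) ^ (k+k) = 1 := by
        rw [← two_mul, pow_mul]; norm_num
      rw [Nat.add_sub_cancel, this, mul_one, pow_succ, mul_comm]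
    · have e1 : (2*k+1+1)/2 = k+1 := by omega
      have e2 : (2*k+1+2)/2 = k+1 := by omega
      rw [e1, e2]
      have : ((-1 : ℤˣ)) ^ (2*k+1) = -1 := by
        rw [pow_succ, pow_mul]; norm_num
      rw [Nat.add_sub_cancel, this, mul_comm ((-1 : ℤˣ) ^ (k+1)) (-1), ← mul_assoc]
      norm_num

/-- The monic polynomial family `p₀ = 1`, `p₁ = X - 1`, `p_{n+2} = X p_{n+1} - p_n`. -/
noncomputable def pB1 : ℕ → Polynomial ℝ
  | 0 => 1
  | 1 => Polynomial.X - 1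
  | (n+2) => Polynomial.X * pB1 (n+1) - pB1 n

lemma pB1_monic_deg : ∀ n, (pB1 n).Monic ∧ (pB1 n).natDegree = n
  | 0 => ⟨monic_one, natDegree_one⟩
  | 1 => ⟨monic_X_sub_C 1,
      by rw [show (pB1 1) = Polynomial.X - Polynomial.C 1 by simp [pB1], natDegree_X_sub_C]⟩
  | (n+2) => by
    obtain ⟨hm1, hd1⟩ := pB1_monic_deg (n+1)
    obtain ⟨hm0, hd0⟩ := pB1_monic_deg n
    have hXm : (Polynomial.X * pB1 (n+1)).Monic := (monic_X).mul hm1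
    have hXd : (Polynomial.X * pB1 (n+1)).natDegree = n + 2 := by
      rw [natDegree_mul X_ne_zero hm1.ne_zero, natDegree_X, hd1]; omega
    have hdeg : (pB1 n).degree < (Polynomial.X * pB1 (n+1)).degree := by
      rw [Polynomial.degree_eq_natDegree hm0.ne_zero,
        Polynomial.degree_eq_natDegree hXm.ne_zero, hd0, hXd]
      exact_mod_cast Nat.lt_succ_of_lt (Nat.lt_succ_self n)
    have hdeg' : (-(pB1 n)).degree < (Polynomial.X * pB1 (n+1)).degree := by
      rwa [degree_neg]
    constructor
    · show (Polynomial.X * pB1 (n+1) - pB1 n).Monic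
      rw [sub_eq_add_neg]
      exact hXm.add_of_left hdeg'
    · show (Polynomial.X * pB1 (n+1) - pB1 n).natDegree = n + 2
      rw [natDegree_sub_eq_left_of_natDegree_lt, hXd]
      rw [hd0, hXd]; omega

lemma pB1_eval (α : ℝ) : ∀ n, (pB1 n).eval (-2 * Real.cos α) =
    (-1) ^ n * (1 + ∑ i ∈ Finset.range n, 2 * Real.cos ((i + 1) * α))
  | 0 => by simp [pB1]
  | 1 => by
    show (Polynomial.X - 1 : Polynomial ℝ).eval _ = _
    simp [Finset.sum_range_one]
    ring
  | (n+2) => by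
    have e1 := pB1_eval α (n+1)
    have e0 := pB1_eval α n
    show ((Polynomial.X * pB1 (n+1) - pB1 n)).eval _ = _
    rw [eval_sub, eval_mul, eval_X, e1, e0]
    have key : ∀ i : ℕ, 2 * Real.cos α * (2 * Real.cos ((i+1) * α)) =
        2 * Real.cos (((i:ℝ)+1+1) * α) + 2 * Real.cos (i * α) := by
      intro i
      have h1 : ((i:ℝ)+1+1) * α = ((i:ℝ)+1) * α + α := by ring
      have h2 : (i:ℝ) * α = ((i:ℝ)+1) * α - α := by ring
      rw [h1, h2, Real.cos_add, Real.cos_sub]; ring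
    have l2 : ∑ i ∈ Finset.range (n+2), 2 * Real.cos ((i+1) * α) =
        2 * Real.cos α + ∑ i ∈ Finset.range (n+1), 2 * Real.cos (((i:ℝ)+1+1) * α) := by
      rw [Finset.sum_range_succ' (fun i : ℕ => 2 * Real.cos ((i+1) * α)) (n+1), add_comm]
      congr 1
      · push_cast; norm_num
      · refine Finset.sum_congr rfl fun i _ => ?_
        push_cast; ring_nf
    have l3 : ∑ i ∈ Finset.range (n+1), 2 * Real.cos ((i:ℝ) * α) =
        2 + ∑ i ∈ Finset.range n, 2 * Real.cos (((i:ℝ)+1) * α) := by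
      rw [Finset.sum_range_succ' (fun i : ℕ => 2 * Real.cos ((i:ℝ) * α)) n, add_comm]
      congr 1
      · push_cast; norm_num
      · refine Finset.sum_congr rfl fun i _ => ?_
        push_cast; ring_nf
    have hs : 2 * Real.cos α * (1 + ∑ i ∈ Finset.range (n+1), 2 * Real.cos ((i+1) * α)) =
        2 + (∑ i ∈ Finset.range (n+2), 2 * Real.cos ((i+1) * α))
          + ∑ i ∈ Finset.range n, 2 * Real.cos ((i+1) * α) := by
      rw [mul_add, mul_one, Finset.mul_sum]
      rw [Finset.sum_congr rfl fun i _ => key i, Finset.sum_add_distrib, l2, l3]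
      ring
    rw [pow_succ, pow_succ]
    linear_combination ((-1:ℝ))^n * hs

lemma icc_to_range_B1 (m : ℕ) (α : ℝ) :
    ∑ i ∈ Finset.Icc 1 m, 2 * Real.cos (i * α) =
      ∑ i ∈ Finset.range m, 2 * Real.cos ((i + 1) * α) := by
  rw [← Finset.Ico_add_one_right_eq_Icc, Finset.sum_Ico_eq_sum_range]
  refine Finset.sum_congr (by rw [Nat.add_sub_cancel]) fun i _ => ?_
  push_cast; ring_nf

end AuxB1

/-- With `α_k = 2kπ/(2r+1)`, `λ_k = −2 cos α_k`, and `v_k` the vector whose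
(1-indexed) `j`-th entry is `(−1)^{r−j} (1 + Σ_{i=1}^{r−j} 2 cos(i α_k))`, the
determinant of `[v₁ ⋯ v_r]` equals `(−1)^{⌊r/2⌋} ∏_{j<i} (λ_i − λ_j)`. -/
theorem det_eigenvector_matrix_B1 (r : ℕ) (hr : 0 < r) :
    (Matrix.of fun j k : Fin r =>
        ((-1 : ℝ)) ^ (r - 1 - (j : ℕ)) *
          (1 + ∑ i ∈ Finset.Icc 1 (r - 1 - (j : ℕ)),
            2 * Real.cos (i * (2 * ((k : ℕ) + 1) * Real.pi / (2 * r + 1))))).det =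
      (-1) ^ (r / 2) *
        ∏ i : Fin r, ∏ j ∈ Finset.Iio i,
          ((-2 * Real.cos (2 * ((i : ℕ) + 1) * Real.pi / (2 * r + 1))) -
            (-2 * Real.cos (2 * ((j : ℕ) + 1) * Real.pi / (2 * r + 1)))) := by
  set v : Fin r → ℝ := fun k => -2 * Real.cos (2 * ((k : ℕ) + 1) * Real.pi / (2 * r + 1)) with hv
  set V : Matrix (Fin r) (Fin r) ℝ :=
    Matrix.of fun k j : Fin r => (pB1 (j : ℕ)).eval (v k) with hV
  have hA : (Matrix.of fun j k : Fin r =>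
        ((-1 : ℝ)) ^ (r - 1 - (j : ℕ)) *
          (1 + ∑ i ∈ Finset.Icc 1 (r - 1 - (j : ℕ)),
            2 * Real.cos (i * (2 * ((k : ℕ) + 1) * Real.pi / (2 * r + 1))))) =
      Vᵀ.submatrix Fin.revPerm id := by
    ext j k
    have hrev : ((Fin.revPerm j : Fin r) : ℕ) = r - 1 - (j : ℕ) := by
      rw [Fin.revPerm_apply, Fin.val_rev]; omega
    simp only [Matrix.submatrix_apply, Matrix.transpose_apply, hV, Matrix.of_apply, id_eq, hrev]
    rw [icc_to_range_B1, pB1_eval]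
  rw [hA, Matrix.det_permute, Matrix.det_transpose]
  have hVd : V.det = ∏ i : Fin r, ∏ j ∈ Finset.Ioi i, (v j - v i) := by
    rw [hV, ← Matrix.det_eval_matrixOfPolynomials_eq_det_vandermonde v (fun j => pB1 (j : ℕ))
      (fun j => (pB1_monic_deg j).2) (fun j => (pB1_monic_deg j).1), Matrix.det_vandermonde]
  rw [hVd, sign_revPerm_B1]
  have hswap : ∏ i : Fin r, ∏ j ∈ Finset.Ioi i, (v j - v i) =
      ∏ i : Fin r, ∏ j ∈ Finset.Iio i, (v i - v j) :=
    Finset.prod_comm' (by simp)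
  rw [hswap]
  push_cast
  ring
end

section
/- Let r be a positive integer and let B_1 be the r×r divisor matrix. Then det W(B_1) = 1, where W(B_1) is the walk matrix of B_1. -/
open Matrix

/-- The divisor matrix `B₁` (0-indexed): `(B₁)_{i,i+1} = (B₁)_{i+1,i} = 1`,
`(B₁)_{r-1,r-1} = 1`, all other entries `0`. -/
def B1 (r : ℕ) : Matrix (Fin r) (Fin r) ℤ :=
  Matrix.of fun i j =>
    if (i : ℕ) + 1 = (j : ℕ) ∨ (j : ℕ) + 1 = (i : ℕ) then 1
    else if (i : ℕ) = r - 1 ∧ (j : ℕ) = r - 1 then 1 else 0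

set_option maxHeartbeats 2000000

section aux

variable {r : ℕ}

lemma B1_split (i k : Fin r) :
    B1 r i k = (if (k : ℕ) + 1 = (i : ℕ) then 1 else 0)
      + (if (i : ℕ) + 1 = (k : ℕ) then 1 else 0)
      + (if (i : ℕ) = r - 1 ∧ (k : ℕ) = r - 1 then 1 else 0) := by
  have hi := i.isLt
  have hk := k.isLt
  simp only [B1, Matrix.of_apply]
  split_ifs <;> omega

lemma sum_ite_coe (x : Fin r → ℤ) (P : ℕ → Prop) [DecidablePred P] (a : ℕ) (ha : a < r)
    (h : ∀ k : ℕ, k < r → (P k ↔ k = a)) :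
    (∑ k : Fin r, if P (k : ℕ) then x k else 0) = x ⟨a, ha⟩ := by
  have : ∀ k : Fin r, (if P (k : ℕ) then x k else 0) = (if k = ⟨a, ha⟩ then x k else 0) := by
    intro k
    have := h k k.isLt
    by_cases hp : P (k : ℕ)
    · rw [if_pos hp, if_pos (Fin.ext (this.mp hp))]
    · rw [if_neg hp, if_neg]
      intro hc
      exact hp (this.mpr (by rw [hc]))
  rw [Finset.sum_congr rfl (fun k _ => this k), Finset.sum_ite_eq']
  simp

lemma sum_ite_none (x : Fin r → ℤ) (P : ℕ → Prop) [DecidablePred P]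
    (h : ∀ k : ℕ, k < r → ¬ P k) :
    (∑ k : Fin r, if P (k : ℕ) then x k else 0) = 0 := by
  apply Finset.sum_eq_zero
  intro k _
  rw [if_neg (h k k.isLt)]

lemma B1_mulVec (x : Fin r → ℤ) (i : ℕ) (hi : i < r) :
    (B1 r *ᵥ x) ⟨i, hi⟩ =
      (if h : 0 < i then x ⟨i - 1, by omega⟩ else 0)
      + (if h : i + 1 < r then x ⟨i + 1, h⟩ else 0)
      + (if i = r - 1 then x ⟨i, hi⟩ else 0) := by
  have : (B1 r *ᵥ x) ⟨i, hi⟩ = ∑ k : Fin r, B1 r ⟨i, hi⟩ k * x k := rfl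
  rw [this]
  have hsplit : ∀ k : Fin r, B1 r ⟨i, hi⟩ k * x k =
      (if (k : ℕ) + 1 = i then x k else 0)
      + (if i + 1 = (k : ℕ) then x k else 0)
      + (if i = r - 1 ∧ (k : ℕ) = r - 1 then x k else 0) := by
    intro k
    rw [B1_split]
    simp only [add_mul, ite_mul, one_mul, zero_mul]
  rw [Finset.sum_congr rfl (fun k _ => hsplit k)]
  rw [Finset.sum_add_distrib, Finset.sum_add_distrib]
  congr 1
  · congr 1
    · by_cases h : 0 < i
      · rw [dif_pos h, sum_ite_coe x (fun k => k + 1 = i) (i - 1) (by omega)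
          (by intro k hk; omega)]
      · rw [dif_neg h, sum_ite_none x (fun k => k + 1 = i) (by intro k hk; omega)]
    · by_cases h : i + 1 < r
      · rw [dif_pos h, sum_ite_coe x (fun k => i + 1 = k) (i + 1) h (by intro k hk; omega)]
      · rw [dif_neg h, sum_ite_none x (fun k => i + 1 = k) (by intro k hk; omega)]
  · by_cases h : i = r - 1
    · rw [if_pos h]
      have : i = r - 1 := h
      rw [sum_ite_coe x (fun k => i = r - 1 ∧ k = r - 1) i hi (by intro k hk; omega)]
    · rw [if_neg h, sum_ite_none x (fun k => i = r - 1 ∧ k = r - 1) (by intro k hk; omega)]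

/-- `vv r j` is `B1^j` applied to the all-ones vector. -/
def vv (r j : ℕ) : Fin r → ℤ := (B1 r) ^ j *ᵥ fun _ => (1 : ℤ)

lemma vv_congr (j a b : ℕ) (ha : a < r) (hb : b < r) (h : a = b) :
    vv r j ⟨a, ha⟩ = vv r j ⟨b, hb⟩ := by subst h; rfl

lemma vv_rec (j i : ℕ) (hi : i < r) :
    vv r (j + 1) ⟨i, hi⟩ =
      (if h : 0 < i then vv r j ⟨i - 1, by omega⟩ else 0)
      + (if h : i + 1 < r then vv r j ⟨i + 1, h⟩ else 0)
      + (if i = r - 1 then vv r j ⟨i, hi⟩ else 0) := by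
  have h1 : vv r (j + 1) ⟨i, hi⟩ = (B1 r *ᵥ vv r j) ⟨i, hi⟩ := by
    unfold vv
    rw [pow_succ', ← Matrix.mulVec_mulVec]
  rw [h1, B1_mulVec]

lemma vv_zero (i : ℕ) (hi : i < r) : vv r 0 ⟨i, hi⟩ = 1 := by simp [vv]

/-- Key invariants: entries of `vv r j` are constant beyond index `j`, and
the step from index `j-1` to `j` is exactly `1`. -/
lemma key (r : ℕ) : ∀ j : ℕ,
    (∀ i : ℕ, j < i → ∀ hi : i < r, vv r j ⟨i, hi⟩ = vv r j ⟨i - 1, by omega⟩)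
    ∧ (∀ hj : j < r, vv r j ⟨j, hj⟩ =
        (if h : 0 < j then vv r j ⟨j - 1, by omega⟩ else 0) + 1) := by
  intro j
  induction j with
  | zero =>
    refine ⟨fun i hi hir => by simp [vv], fun hj => by simp [vv]⟩
  | succ j ih =>
    obtain ⟨ihC, ihD⟩ := ih
    have hC : ∀ i : ℕ, j + 1 < i → ∀ hi : i < r,
        vv r (j + 1) ⟨i, hi⟩ = vv r (j + 1) ⟨i - 1, by omega⟩ := by
      intro i hji hi
      have hi1 : 0 < i := by omega
      have hi2 : 0 < i - 1 := by omega
      have A := vv_rec j i hi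
      have B := vv_rec j (i - 1) (by omega : i - 1 < r)
      simp only [dif_pos hi1] at A
      simp only [dif_pos hi2, dif_pos (show i - 1 + 1 < r by omega),
        if_neg (show ¬(i - 1 = r - 1) by omega)] at B
      rw [vv_congr j (i - 1 + 1) i (by omega) hi (by omega)] at B
      have hstep1 : vv r j ⟨i - 1, by omega⟩ = vv r j ⟨i - 1 - 1, by omega⟩ :=
        ihC (i - 1) (by omega) (by omega)
      by_cases hlast : i = r - 1
      · simp only [dif_neg (show ¬(i + 1 < r) by omega), if_pos hlast] at A
        linarith [A, B, hstep1]
      · have hi3 : i + 1 < r := by omega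
        simp only [dif_pos hi3, if_neg hlast] at A
        have hstep2 : vv r j ⟨i + 1, hi3⟩ = vv r j ⟨i + 1 - 1, by omega⟩ :=
          ihC (i + 1) (by omega) hi3
        rw [vv_congr j (i + 1 - 1) i (by omega) hi (by omega)] at hstep2
        linarith [A, B, hstep1, hstep2]
    refine ⟨hC, ?_⟩
    intro hj
    have A := vv_rec j (j + 1) hj
    simp only [dif_pos (Nat.succ_pos j)] at A
    rw [vv_congr j (j + 1 - 1) j (by omega) (by omega) (by omega)] at A
    have B := vv_rec j j (by omega : j < r)
    simp only [dif_pos (show j + 1 < r from hj), if_neg (show ¬(j = r - 1) by omega)] at B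
    simp only [dif_pos (Nat.succ_pos j)]
    rw [vv_congr (j + 1) (j + 1 - 1) j (by omega) (by omega) (by omega)]
    have hD := ihD (by omega : j < r)
    by_cases hlast : j + 1 = r - 1
    · simp only [dif_neg (show ¬(j + 1 + 1 < r) by omega), if_pos hlast] at A
      by_cases hj0 : 0 < j
      · simp only [dif_pos hj0] at hD B
        linarith [A, B, hD]
      · simp only [dif_neg hj0] at hD B
        linarith [A, B, hD, vv_zero (r := r) j (by omega)]
    · have hj2 : j + 1 + 1 < r := by omega
      simp only [dif_pos hj2, if_neg hlast] at A
      have hconst : vv r j ⟨j + 1 + 1, hj2⟩ = vv r j ⟨j + 1, hj⟩ := by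
        have h := ihC (j + 1 + 1) (by omega) hj2
        rw [vv_congr j (j + 1 + 1 - 1) (j + 1) (by omega) hj (by omega)] at h
        exact h
      rw [hconst] at A
      by_cases hj0 : 0 < j
      · simp only [dif_pos hj0] at hD B
        linarith [A, B, hD]
      · simp only [dif_neg hj0] at hD B
        linarith [A, B, hD, vv_zero (r := r) j (by omega)]

lemma L_split (i k : Fin r) :
    (Matrix.of (fun i j : Fin r => if i = j then (1:ℤ) else if (j : ℕ) + 1 = (i : ℕ) then -1 else 0)) i k
      = (if k = i then (1:ℤ) else 0) + (if (k : ℕ) + 1 = (i : ℕ) then -1 else 0) := by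
  have hi := i.isLt
  have hk := k.isLt
  simp only [Matrix.of_apply, Fin.ext_iff]
  split_ifs <;> omega

end aux

/-- The determinant of the walk matrix of `B₁` is `1`. -/
theorem det_walkMatrix_B1 (r : ℕ) (hr : 0 < r) : (walkMatrix (B1 r)).det = 1 := by
  set L : Matrix (Fin r) (Fin r) ℤ :=
    Matrix.of (fun i j => if i = j then 1 else if (j : ℕ) + 1 = (i : ℕ) then -1 else 0) with hL
  set W : Matrix (Fin r) (Fin r) ℤ := walkMatrix (B1 r) with hW
  have hWv : ∀ i j : Fin r, W i j = vv r (j : ℕ) i := fun i j => rfl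
  -- L is lower triangular with unit diagonal
  have hLtri : L.BlockTriangular OrderDual.toDual := by
    intro i j hij
    have hij' : (i : ℕ) < (j : ℕ) := hij
    simp only [hL, Matrix.of_apply]
    rw [if_neg (show ¬ i = j by simp [Fin.ext_iff]; omega),
      if_neg (show ¬ (j : ℕ) + 1 = (i : ℕ) by omega)]
  have hdetL : L.det = 1 := by
    rw [Matrix.det_of_lowerTriangular L hLtri]
    apply Finset.prod_eq_one
    intro i _
    simp [hL]
  -- entries of L * W
  have hLW : ∀ i j : Fin r, (L * W) i j =
      vv r (j : ℕ) i - (if h : 0 < (i : ℕ) then vv r (j : ℕ) ⟨(i : ℕ) - 1, by omega⟩ else 0) := by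
    intro i j
    have h0 : (L * W) i j = ∑ k : Fin r, L i k * W k j := rfl
    rw [h0]
    have hsp : ∀ k : Fin r, L i k * W k j =
        (if k = i then vv r (j : ℕ) k else 0)
        + (if (k : ℕ) + 1 = (i : ℕ) then -vv r (j : ℕ) k else 0) := by
      intro k
      rw [hL, L_split, hWv]
      simp only [add_mul, ite_mul, one_mul, zero_mul, neg_mul, neg_one_mul]
    rw [Finset.sum_congr rfl (fun k _ => hsp k), Finset.sum_add_distrib]
    congr 1
    · rw [Finset.sum_ite_eq']
      simp
    · by_cases h : 0 < (i : ℕ)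
      · rw [dif_pos h,
          sum_ite_coe (fun k => -vv r (j : ℕ) k) (fun k => k + 1 = (i : ℕ)) ((i : ℕ) - 1)
            (by omega) (by intro k hk; omega)]
      · rw [dif_neg h,
          sum_ite_none (fun k => -vv r (j : ℕ) k) (fun k => k + 1 = (i : ℕ))
            (by intro k hk; omega)]
        ring
  -- L * W is upper triangular with unit diagonal
  have hUtri : (L * W).BlockTriangular id := by
    intro i j hij
    have hij' : (j : ℕ) < (i : ℕ) := hij
    rw [hLW]
    have h := (key r (j : ℕ)).1 (i : ℕ) hij' i.isLt
    have e : (⟨(i : ℕ), i.isLt⟩ : Fin r) = i := Fin.ext rfl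
    rw [e] at h
    rw [h, dif_pos (show 0 < (i : ℕ) by omega), sub_self]
  have hdiag : ∀ i : Fin r, (L * W) i i = 1 := by
    intro i
    rw [hLW]
    have h := (key r (i : ℕ)).2 i.isLt
    have e : (⟨(i : ℕ), i.isLt⟩ : Fin r) = i := Fin.ext rfl
    rw [e] at h
    rw [h, add_sub_cancel_left]
  have hdetLW : (L * W).det = 1 := by
    rw [Matrix.det_of_upperTriangular hUtri]
    apply Finset.prod_eq_one
    intro i _
    exact hdiag i
  have hmul := Matrix.det_mul L W
  rw [hdetL, one_mul] at hmul
  rw [← hmul, hdetLW]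
end

section
/- Let r be a positive integer and for 1 ≤ k ≤ r set β_k = (2k−1)π/(2r) and μ_k = 2cos β_k. Define the real vector w_k of dimension r by (w_k)_j = 2cos((r−j)·β_k) for j = 1, ..., r−1 and (w_k)_r = 1. Then for each k = 1, ..., r, the vector w_k is an eigenvector of B_2^T corresponding to the eigenvalue μ_k, i.e. B_2^T w_k = μ_k w_k and w_k ≠ 0. -/
open Matrix Real

/-- The divisor matrix `B₂` over ℝ (0-indexed): `(B₂)_{i,i+1} = 1` for all `i`,
`(B₂)_{i,i-1} = 1` for `1 ≤ i ≤ r-2`, `(B₂)_{r-1,r-2} = 2`, all other entries `0`. -/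
noncomputable def B2 (r : ℕ) : Matrix (Fin r) (Fin r) ℝ :=
  Matrix.of fun i j =>
    if (i : ℕ) + 1 = (j : ℕ) then 1
    else if (j : ℕ) + 1 = (i : ℕ) then (if (i : ℕ) = r - 1 then 2 else 1)
    else 0

/-- For `β_k = (2k−1)π/(2r)`, the vector `w_k` with (1-indexed) entries
`(w_k)_j = 2 cos((r−j) β_k)` for `j < r` and `(w_k)_r = 1` is an eigenvector of
`B₂ᵀ` for the eigenvalue `μ_k = 2 cos β_k`. -/
theorem B2_transpose_eigenvector (r : ℕ) (hr : 0 < r) (k : ℕ) (hk1 : 1 ≤ k) (hkr : k ≤ r)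
    (β : ℝ) (hβ : β = (2 * (k : ℝ) - 1) * Real.pi / (2 * r))
    (μ : ℝ) (hμ : μ = 2 * Real.cos β)
    (w : Fin r → ℝ)
    (hw : ∀ j : Fin r, w j =
      if (j : ℕ) = r - 1 then 1 else 2 * Real.cos ((↑(r - 1 - (j : ℕ)) : ℝ) * β)) :
    (B2 r)ᵀ *ᵥ w = μ • w ∧ w ≠ 0 := by
  have hr' : (r:ℝ) ≠ 0 := Nat.cast_ne_zero.mpr hr.ne'
  have hrβ : Real.cos ((r:ℝ) * β) = 0 := by
    have h1 : (r:ℝ) * β = -(Real.pi / 2 - (k:ℝ) * Real.pi) := by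
      rw [hβ]; field_simp; ring
    rw [h1, Real.cos_neg, Real.cos_pi_div_two_sub, Real.sin_nat_mul_pi]
  have key : ∀ x : ℝ, 2 * Real.cos β * (2 * Real.cos (x * β)) =
      2 * Real.cos ((x + 1) * β) + 2 * Real.cos ((x - 1) * β) := by
    intro x
    have h1 : (x + 1) * β = x * β + β := by ring
    have h2 : (x - 1) * β = x * β - β := by ring
    rw [h1, h2, Real.cos_add, Real.cos_sub]; ring
  constructor
  · funext i
    have him := i.isLt
    have hsum : ((B2 r)ᵀ *ᵥ w) i =
        (∑ j : Fin r, if (j : ℕ) + 1 = (i : ℕ) then w j else 0)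
        + (∑ j : Fin r, if (i : ℕ) + 1 = (j : ℕ) then
            (if (j : ℕ) = r - 1 then 2 else 1) * w j else 0) := by
      simp only [mulVec, dotProduct, ← Finset.sum_add_distrib]
      apply Finset.sum_congr rfl
      intro j _
      simp only [transpose_apply, B2, of_apply]
      split_ifs <;> first | (exfalso; omega) | ring
    have hs1 : (∑ j : Fin r, if (j : ℕ) + 1 = (i : ℕ) then w j else 0) =
        if h : 1 ≤ (i : ℕ) then w ⟨(i : ℕ) - 1, by omega⟩ else 0 := by
      by_cases h : 1 ≤ (i : ℕ)
      · rw [dif_pos h,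
          Finset.sum_eq_single_of_mem (⟨(i : ℕ) - 1, by omega⟩ : Fin r) (Finset.mem_univ _)]
        · rw [if_pos]; simp only [Fin.val_mk]; omega
        · intro b _ hb
          rw [if_neg]
          intro hc
          exact hb (Fin.ext (by simp only [Fin.val_mk]; omega))
      · rw [dif_neg h]
        apply Finset.sum_eq_zero
        intro j _
        rw [if_neg]; omega
    have hs2 : (∑ j : Fin r, if (i : ℕ) + 1 = (j : ℕ) then
          (if (j : ℕ) = r - 1 then 2 else 1) * w j else 0) =
        if h : (i : ℕ) + 1 < r then
          (if (i : ℕ) + 1 = r - 1 then 2 else 1) * w ⟨(i : ℕ) + 1, h⟩ else 0 := by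
      by_cases h : (i : ℕ) + 1 < r
      · rw [dif_pos h,
          Finset.sum_eq_single_of_mem (⟨(i : ℕ) + 1, h⟩ : Fin r) (Finset.mem_univ _)]
        · simp only [Fin.val_mk, eq_self_iff_true, if_true]
        · intro b _ hb
          rw [if_neg]
          intro hc
          exact hb (Fin.ext (by simp only [Fin.val_mk]; omega))
      · rw [dif_neg h]
        apply Finset.sum_eq_zero
        intro j _
        rw [if_neg]
        intro hc
        exact h (hc ▸ j.isLt)
    rw [hsum, hs1, hs2]
    simp only [Pi.smul_apply, smul_eq_mul, hμ]
    by_cases hend : (i : ℕ) = r - 1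
    · -- last row
      have e2 : (if h : (i : ℕ) + 1 < r then
          (if (i : ℕ) + 1 = r - 1 then 2 else 1) * w ⟨(i : ℕ) + 1, h⟩ else 0) = 0 :=
        dif_neg (by omega)
      rw [e2, hw i, if_pos hend]
      by_cases hr1 : r = 1
      · have e1 : (if h : 1 ≤ (i : ℕ) then w ⟨(i : ℕ) - 1, by omega⟩ else 0) = 0 :=
          dif_neg (by omega)
        have hc : Real.cos β = 0 := by
          have := hrβ; rw [hr1] at this; simpa using this
        rw [e1, hc]; ring
      · have e1 : (if h : 1 ≤ (i : ℕ) then w ⟨(i : ℕ) - 1, by omega⟩ else 0) =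
            2 * Real.cos β := by
          rw [dif_pos (show 1 ≤ (i:ℕ) by omega), hw _,
            if_neg (show ¬((⟨(i:ℕ) - 1, by omega⟩ : Fin r) : ℕ) = r - 1 by
              simp only [Fin.val_mk]; omega)]
          have hc : ((r - 1 - (((⟨(i:ℕ) - 1, by omega⟩ : Fin r)) : ℕ) : ℕ) : ℝ) = 1 := by
            simp only [Fin.val_mk]
            have : r - 1 - ((i:ℕ) - 1) = 1 := by omega
            rw [this]; norm_num
          rw [hc, one_mul]
        rw [e1]; ring
    · -- i < r - 1
      have hlt : (i : ℕ) < r - 1 := by omega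
      rw [hw i, if_neg hend]
      have hn : ((r - 1 - (i:ℕ) : ℕ) : ℝ) = (r:ℝ) - 1 - (i:ℕ) := by
        have h5 : r - 1 - (i:ℕ) = r - (1 + (i:ℕ)) := by omega
        rw [h5, Nat.cast_sub (by omega : 1 + (i:ℕ) ≤ r)]
        push_cast; ring
      rw [hn, key ((r:ℝ) - 1 - (i:ℕ))]
      have e2 : (if h : (i : ℕ) + 1 < r then
          (if (i : ℕ) + 1 = r - 1 then 2 else 1) * w ⟨(i : ℕ) + 1, h⟩ else 0) =
          2 * Real.cos (((r:ℝ) - 1 - (i:ℕ) - 1) * β) := by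
        rw [dif_pos (show (i:ℕ) + 1 < r by omega)]
        by_cases h31 : (i:ℕ) + 1 = r - 1
        · rw [if_pos h31, hw _, if_pos (show ((⟨(i:ℕ)+1, by omega⟩ : Fin r) : ℕ) = r - 1 from h31)]
          have hz : (r:ℝ) - 1 - (i:ℕ) - 1 = 0 := by
            have h4 : (r:ℝ) = (i:ℕ) + 2 := by exact_mod_cast (show ((i:ℕ) + 2 : ℕ) = r by omega).symm
            rw [h4]; ring
          rw [hz]; simp
        · rw [if_neg h31, hw _,
            if_neg (show ¬((⟨(i:ℕ)+1, by omega⟩ : Fin r) : ℕ) = r - 1 from h31)]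
          have hc : ((r - 1 - (((⟨(i:ℕ)+1, by omega⟩ : Fin r)) : ℕ) : ℕ) : ℝ) =
              (r:ℝ) - 1 - (i:ℕ) - 1 := by
            simp only [Fin.val_mk]
            have h5 : r - 1 - ((i:ℕ) + 1) = r - ((i:ℕ) + 2) := by omega
            rw [h5, Nat.cast_sub (by omega : (i:ℕ) + 2 ≤ r)]
            push_cast; ring
          rw [hc, one_mul]
      have e1 : (if h : 1 ≤ (i : ℕ) then w ⟨(i : ℕ) - 1, by omega⟩ else 0) =
          2 * Real.cos (((r:ℝ) - 1 - (i:ℕ) + 1) * β) := by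
        by_cases hi0 : 1 ≤ (i:ℕ)
        · rw [dif_pos hi0, hw _,
            if_neg (show ¬((⟨(i:ℕ)-1, by omega⟩ : Fin r) : ℕ) = r - 1 by
              simp only [Fin.val_mk]; omega)]
          have hc : ((r - 1 - (((⟨(i:ℕ)-1, by omega⟩ : Fin r)) : ℕ) : ℕ) : ℝ) =
              (r:ℝ) - 1 - (i:ℕ) + 1 := by
            simp only [Fin.val_mk]
            have h5 : r - 1 - ((i:ℕ) - 1) = r - (i:ℕ) := by omega
            rw [h5, Nat.cast_sub (by omega : (i:ℕ) ≤ r)]; ring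
          rw [hc]
        · rw [dif_neg hi0]
          have hi00 : (i:ℕ) = 0 := by omega
          have hz : ((r:ℝ) - 1 - (i:ℕ) + 1) = (r:ℝ) := by rw [hi00]; push_cast; ring
          rw [hz, hrβ]; ring
      rw [e1, e2]
  · intro h
    have h1 := congrFun h ⟨r - 1, by omega⟩
    rw [hw] at h1
    norm_num at h1
end

section
/- Let r be a positive integer and for 1 ≤ k ≤ r set β_k = (2k−1)π/(2r). Define the real vector w_k of dimension r by (w_k)_j = 2cos((r−j)·β_k) for j = 1, ..., r−1 and (w_k)_r = 1. Then ∏_{k=1}^{r} (e_r^T w_k) = (−1)^{⌊r/2⌋}, where e_r^T w_k denotes the sum of the entries of w_k. -/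
open Real

open Finset in
lemma sum_two_cos_mul (θ : ℝ) (r : ℕ) :
    (∑ m ∈ Finset.range r, 2 * Real.cos (m * θ)) * Real.sin (θ/2)
      = Real.sin ((2*(r:ℝ)-1) * θ/2) + Real.sin (θ/2) := by
  induction r with
  | zero =>
      simp only [Finset.range_zero, Finset.sum_empty, zero_mul, Nat.cast_zero]
      rw [show (2*(0:ℝ)-1) * θ/2 = -(θ/2) by ring, Real.sin_neg]
      ring
  | succ n ih =>
      rw [Finset.sum_range_succ, add_mul, ih]
      have h := Real.sin_sub_sin ((2*((n:ℝ)+1)-1) * θ/2) ((2*(n:ℝ)-1) * θ/2)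
      have h1 : ((2*((n:ℝ)+1)-1) * θ/2 - (2*(n:ℝ)-1) * θ/2)/2 = θ/2 := by ring
      have h2 : ((2*((n:ℝ)+1)-1) * θ/2 + (2*(n:ℝ)-1) * θ/2)/2 = n * θ := by ring
      rw [h1, h2] at h
      push_cast
      linarith [h]

-- key sum formula
lemma entry_sum_eq (r k : ℕ) (hr : 0 < r) (hk1 : 1 ≤ k) (hk2 : k ≤ r) :
    (∑ j : Fin r,
        if (j : ℕ) = r - 1 then (1 : ℝ)
        else 2 * Real.cos ((↑(r - 1 - (j : ℕ)) : ℝ) *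
          ((2 * (k : ℝ) - 1) * Real.pi / (2 * r)))) =
      (-1)^(k-1) * Real.cos ((2*(k:ℝ)-1) * Real.pi / (4*r))
        / Real.sin ((2*(k:ℝ)-1) * Real.pi / (4*r)) := by
  set β : ℝ := (2 * (k : ℝ) - 1) * Real.pi / (2 * r) with hβ
  have hrR : (0:ℝ) < r := by exact_mod_cast hr
  have hθ : β/2 = (2*(k:ℝ)-1) * Real.pi / (4*r) := by rw [hβ]; ring
  -- bounds for β/2 ∈ (0, π/2)
  have hk2R : (k:ℝ) ≤ r := by exact_mod_cast hk2
  have hk1R : (1:ℝ) ≤ k := by exact_mod_cast hk1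
  have hpos : 0 < β/2 := by
    rw [hθ]
    apply div_pos (by nlinarith [Real.pi_pos]) (by linarith)
  have hlt : β/2 < Real.pi/2 := by
    rw [hθ, div_lt_div_iff₀ (by linarith) (by norm_num)]
    nlinarith [Real.pi_pos]
  have hsin : 0 < Real.sin (β/2) :=
    Real.sin_pos_of_pos_of_lt_pi hpos (by linarith [Real.pi_pos])
  -- step 1: reindex the sum
  have step1 : (∑ j : Fin r,
        if (j : ℕ) = r - 1 then (1 : ℝ)
        else 2 * Real.cos ((↑(r - 1 - (j : ℕ)) : ℝ) * β)) =
      (∑ m ∈ Finset.range r, 2 * Real.cos (m * β)) - 1 := by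
    rw [Fin.sum_univ_eq_sum_range (fun j => if j = r - 1 then (1:ℝ)
        else 2 * Real.cos ((↑(r - 1 - j) : ℝ) * β))]
    rw [← Finset.sum_range_reflect]
    have : ∀ m ∈ Finset.range r,
        (if r - 1 - m = r - 1 then (1:ℝ)
          else 2 * Real.cos ((↑(r - 1 - (r - 1 - m)) : ℝ) * β)) =
        2 * Real.cos (m * β) - (if m = 0 then 1 else 0) := by
      intro m hm
      rw [Finset.mem_range] at hm
      rcases Nat.eq_zero_or_pos m with h0 | h0
      · subst h0; norm_num
      · have hne : r - 1 - m ≠ r - 1 := by omega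
        have hmm : r - 1 - (r - 1 - m) = m := by omega
        rw [if_neg hne, hmm, if_neg (by omega)]
        ring
    rw [Finset.sum_congr rfl this, Finset.sum_sub_distrib,
      Finset.sum_ite_eq' (Finset.range r) 0 (fun _ => (1:ℝ)),
      if_pos (Finset.mem_range.mpr hr)]
  rw [step1, ← hθ]
  rw [eq_div_iff (ne_of_gt hsin)]
  rw [sub_mul, sum_two_cos_mul β r]
  -- now: sin((2r-1)β/2) = (-1)^(k-1) cos(β/2)
  have key : (2*(r:ℝ)-1) * β/2 = (k:ℕ) * Real.pi - (Real.pi/2 + β/2) := by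
    rw [hβ]; field_simp; ring
  rw [key, Real.sin_nat_mul_pi_sub, Real.sin_add, Real.sin_pi_div_two,
    Real.cos_pi_div_two]
  obtain ⟨k', rfl⟩ : ∃ k', k = k' + 1 := ⟨k - 1, by omega⟩
  simp [pow_succ]

lemma neg_one_pow_congr' (a b : ℕ) (h : a % 2 = b % 2) : ((-1:ℝ))^a = (-1)^b := by
  rcases Nat.even_or_odd a with ha | ha
  · have hb : Even b := by rw [Nat.even_iff] at ha ⊢; omega
    rw [ha.neg_one_pow, hb.neg_one_pow]
  · have hb : Odd b := by rw [Nat.odd_iff] at ha ⊢; omega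
    rw [ha.neg_one_pow, hb.neg_one_pow]


/-- With `β_k = (2k−1)π/(2r)` and `w_k` the vector with (1-indexed) entries
`(w_k)_j = 2 cos((r−j) β_k)` for `j < r` and `(w_k)_r = 1`, the product of the
entry sums `∏_{k=1}^{r} eᵀ w_k` equals `(−1)^{⌊r/2⌋}`. -/
theorem prod_entrySum_w_eq (r : ℕ) (hr : 0 < r) :
    ∏ k ∈ Finset.Icc 1 r,
        (∑ j : Fin r,
          if (j : ℕ) = r - 1 then (1 : ℝ)
          else 2 * Real.cos ((↑(r - 1 - (j : ℕ)) : ℝ) *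
            ((2 * (k : ℝ) - 1) * Real.pi / (2 * r)))) =
      (-1) ^ (r / 2) := by
  have hrR : (0:ℝ) < r := by exact_mod_cast hr
  rw [Finset.prod_congr rfl (fun k hk =>
    entry_sum_eq r k hr (Finset.mem_Icc.mp hk).1 (Finset.mem_Icc.mp hk).2)]
  set θ : ℕ → ℝ := fun k => (2*(k:ℝ)-1) * Real.pi / (4*r) with hθ
  have hθpos : ∀ k ∈ Finset.Icc 1 r, 0 < θ k ∧ θ k < Real.pi/2 := by
    intro k hk
    rw [Finset.mem_Icc] at hk
    have h1 : (1:ℝ) ≤ k := by exact_mod_cast hk.1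
    have h2 : (k:ℝ) ≤ r := by exact_mod_cast hk.2
    constructor
    · exact div_pos (by nlinarith [Real.pi_pos]) (by linarith)
    · rw [hθ, div_lt_div_iff₀ (by linarith) (by norm_num)]
      nlinarith [Real.pi_pos]
  have hcospos : ∀ k ∈ Finset.Icc 1 r, 0 < Real.cos (θ k) := fun k hk =>
    Real.cos_pos_of_mem_Ioo ⟨by linarith [(hθpos k hk).1, Real.pi_pos], (hθpos k hk).2⟩
  have hsincos : ∏ k ∈ Finset.Icc 1 r, Real.sin (θ k)
      = ∏ k ∈ Finset.Icc 1 r, Real.cos (θ k) := by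
    apply Finset.prod_nbij' (fun k => r + 1 - k) (fun k => r + 1 - k)
    · intro a ha; rw [Finset.mem_Icc] at ha ⊢; omega
    · intro a ha; rw [Finset.mem_Icc] at ha ⊢; omega
    · intro a ha; rw [Finset.mem_Icc] at ha; omega
    · intro a ha; rw [Finset.mem_Icc] at ha; omega
    · intro a ha
      rw [Finset.mem_Icc] at ha
      have hcast : ((r + 1 - a : ℕ) : ℝ) = (r:ℝ) + 1 - a := by
        have : a ≤ r + 1 := by omega
        push_cast [this]; ring
      have harg : θ (r + 1 - a) = Real.pi/2 - θ a := by
        rw [hθ]; simp only [hcast]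
        field_simp
        ring
      rw [harg, Real.cos_pi_div_two_sub]
  rw [Finset.prod_congr rfl (fun k (hk : k ∈ Finset.Icc 1 r) =>
    (show (-1:ℝ)^(k-1) * Real.cos (θ k) / Real.sin (θ k)
        = (-1:ℝ)^(k-1) * (Real.cos (θ k) / Real.sin (θ k)) by ring))]
  rw [Finset.prod_mul_distrib, Finset.prod_div_distrib, hsincos,
    div_self (ne_of_gt (Finset.prod_pos hcospos)), mul_one,
    Finset.prod_pow_eq_pow_sum]
  -- compute the exponent sum and its parity
  have hE : (∑ k ∈ Finset.Icc 1 r, (k-1)) = ∑ i ∈ Finset.range r, i := by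
    rw [← Finset.Ico_add_one_right_eq_Icc, Finset.sum_Ico_eq_sum_range]
    simp
  rw [hE]
  have hE2 := Finset.sum_range_id_mul_two r
  apply neg_one_pow_congr'
  set E := ∑ i ∈ Finset.range r, i with hEdef
  rcases Nat.even_or_odd' r with ⟨m, rfl | rfl⟩
  · have hm : 1 ≤ m := by omega
    have hs : 2*m - 1 = 2*(m-1) + 1 := by omega
    have hEeq : E = m * (2*m-1) := by
      apply Nat.eq_of_mul_eq_mul_right (show 0 < 2 by norm_num)
      rw [hE2, hs]; ring
    rw [hEeq, Nat.mul_mod, hs, show (2*(m-1)+1) % 2 = 1 from by omega, Nat.mul_one]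
    omega
  · have hs : 2*m + 1 - 1 = 2*m := by omega
    have hEeq : E = m * (2*m+1) := by
      apply Nat.eq_of_mul_eq_mul_right (show 0 < 2 by norm_num)
      rw [hE2, hs]; ring
    rw [hEeq, Nat.mul_mod, show (2*m+1) % 2 = 1 from by omega, Nat.mul_one]
    omega
end

section
/- Let r be a positive integer and for 1 ≤ k ≤ r set β_k = (2k−1)π/(2r) and μ_k = 2cos β_k. Define the real vector w_k of dimension r by (w_k)_j = 2cos((r−j)·β_k) for j = 1, ..., r−1 and (w_k)_r = 1. Then det[w_1 w_2 ⋯ w_r] = (−1)^{⌊r/2⌋} · ∏_{1 ≤ j < i ≤ r} (μ_i − μ_j). -/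
open Matrix Real Polynomial Finset

noncomputable def sP : ℕ → Polynomial ℝ
  | 0 => 2
  | 1 => Polynomial.X
  | (n+2) => Polynomial.X * sP (n+1) - sP n

lemma sP_eval (β : ℝ) : ∀ n : ℕ, (sP n).eval (2 * Real.cos β) = 2 * Real.cos (n * β)
  | 0 => by simp [sP]
  | 1 => by simp [sP]
  | (n+2) => by
      have h1 := sP_eval β (n+1)
      have h0 := sP_eval β n
      have key : Real.cos (((n:ℝ)+2)*β) = 2 * Real.cos (((n:ℝ)+1)*β) * Real.cos β
          - Real.cos ((n:ℝ)*β) := by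
        have e1 : ((n:ℝ)+2)*β = ((n:ℝ)+1)*β + β := by ring
        have e2 : (n:ℝ)*β = ((n:ℝ)+1)*β - β := by ring
        rw [e1, e2, Real.cos_add, Real.cos_sub]; ring
      simp only [sP, eval_sub, eval_mul, eval_X, h1, h0]
      push_cast
      rw [key]; ring

lemma sP_monic : ∀ n : ℕ, 1 ≤ n → (sP n).Monic ∧ (sP n).natDegree = n
  | 1, _ => ⟨by show Polynomial.X.Monic; exact monic_X, by simp [sP]⟩
  | (n+2), _ => by
      obtain ⟨hm, hd⟩ := sP_monic (n+1) (by omega)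
      have hmul : (Polynomial.X * sP (n+1)).Monic := monic_X.mul hm
      have hdmul : (Polynomial.X * sP (n+1)).natDegree = n + 2 := by
        rw [natDegree_mul (X_ne_zero) hm.ne_zero, natDegree_X, hd]; omega
      have hlt : (sP n).natDegree < (Polynomial.X * sP (n+1)).natDegree := by
        rw [hdmul]
        rcases Nat.eq_zero_or_pos n with h | h
        · subst h
          have : (sP 0).natDegree = 0 := by
            show ((2 : Polynomial ℝ)).natDegree = 0
            simp
          omega
        · rw [(sP_monic n h).2]; omega
      constructor
      · show (Polynomial.X * sP (n+1) - sP n).Monic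
        exact hmul.sub_of_left (degree_lt_degree hlt)
      · show (Polynomial.X * sP (n+1) - sP n).natDegree = n + 2
        rw [natDegree_sub_eq_left_of_natDegree_lt hlt, hdmul]

noncomputable def rP (d : ℕ) : Polynomial ℝ := if d = 0 then 1 else sP d

lemma rP_monic (d : ℕ) : (rP d).Monic := by
  rcases Nat.eq_zero_or_pos d with h | h
  · simp [rP, h, monic_one]
  · simp only [rP, if_neg h.ne']; exact (sP_monic d h).1

lemma rP_natDegree (d : ℕ) : (rP d).natDegree = d := by
  rcases Nat.eq_zero_or_pos d with h | h
  · simp [rP, h]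
  · simp only [rP, if_neg h.ne']; exact (sP_monic d h).2

lemma prod_Ioi_eq_prod_Iio {r : ℕ} (f : Fin r → Fin r → ℝ) :
    ∏ i : Fin r, ∏ j ∈ Finset.Ioi i, f i j = ∏ i : Fin r, ∏ j ∈ Finset.Iio i, f j i := by
  rw [Finset.prod_sigma', Finset.prod_sigma']
  refine Finset.prod_bij' (fun p _ => ⟨p.2, p.1⟩) (fun p _ => ⟨p.2, p.1⟩) ?_ ?_ ?_ ?_ ?_
  · rintro ⟨a, b⟩ h
    simp only [Finset.mem_sigma, Finset.mem_Ioi, Finset.mem_Iio, Finset.mem_univ, true_and]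
      at h ⊢
    exact h
  · rintro ⟨a, b⟩ h
    simp only [Finset.mem_sigma, Finset.mem_Ioi, Finset.mem_Iio, Finset.mem_univ, true_and]
      at h ⊢
    exact h
  · rintro ⟨a, b⟩ _; simp
  · rintro ⟨a, b⟩ _; simp
  · rintro ⟨a, b⟩ _; simp

lemma prod_pairs_rev {r : ℕ} (f : Fin r → Fin r → ℝ) :
    ∏ i : Fin r, ∏ j ∈ Finset.Iio i, f i.rev j.rev =
    ∏ i : Fin r, ∏ j ∈ Finset.Iio i, f j i := by
  rw [Finset.prod_sigma', Finset.prod_sigma']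
  refine Finset.prod_bij' (fun p _ => ⟨p.2.rev, p.1.rev⟩) (fun p _ => ⟨p.2.rev, p.1.rev⟩)
    ?_ ?_ ?_ ?_ ?_
  · rintro ⟨a, b⟩ h
    simp only [Finset.mem_sigma, Finset.mem_Iio, Finset.mem_univ, true_and] at h ⊢
    exact Fin.rev_lt_rev.mpr h
  · rintro ⟨a, b⟩ h
    simp only [Finset.mem_sigma, Finset.mem_Iio, Finset.mem_univ, true_and] at h ⊢
    exact Fin.rev_lt_rev.mpr h
  · rintro ⟨a, b⟩ _; simp [Fin.rev_rev]
  · rintro ⟨a, b⟩ _; simp [Fin.rev_rev]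
  · rintro ⟨a, b⟩ _; simp [Fin.rev_rev]

lemma neg_one_pow_gauss (r : ℕ) (hr : 0 < r) :
    (-1 : ℝ) ^ (∑ i ∈ Finset.range r, i) = (-1) ^ (r / 2) := by
  set a := ∑ i ∈ Finset.range r, i with ha
  have h2 : a * 2 = r * (r - 1) := Finset.sum_range_id_mul_two r
  suffices h : a % 2 = (r / 2) % 2 by
    rcases Nat.even_or_odd a with he | ho
    · have h0 : a % 2 = 0 := Nat.even_iff.mp he
      rw [he.neg_one_pow, Even.neg_one_pow (Nat.even_iff.mpr (by omega))]
    · have h1 : a % 2 = 1 := Nat.odd_iff.mp ho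
      rw [ho.neg_one_pow, Odd.neg_one_pow (Nat.odd_iff.mpr (by omega))]
  rcases Nat.even_or_odd r with ⟨m, rfl⟩ | ⟨m, rfl⟩
  · have hm : 0 < m := by omega
    set d := 2 * m - 1 with hd
    have hrd : m + m - 1 = d := by omega
    have hamd : a = m * d := by
      have h3 : a * 2 = (m * d) * 2 := by rw [h2, hrd]; ring
      omega
    have hd2 : d % 2 = 1 := by omega
    have hmm : m * d % 2 = m % 2 := by
      simp [Nat.mul_mod, hd2]
    omega
  · set d := 2 * m + 1 with hd
    have hamd : a = d * m := by
      have h3 : a * 2 = (d * m) * 2 := by rw [h2, Nat.add_sub_cancel]; ring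
      omega
    have hmm : d * m % 2 = m % 2 := by
      have hd2 : d % 2 = 1 := by omega
      simp [Nat.mul_mod, hd2]
    omega

/-- With `β_k = (2k−1)π/(2r)`, `μ_k = 2 cos β_k`, and `w_k` the vector with
(1-indexed) entries `(w_k)_j = 2 cos((r−j) β_k)` for `j < r` and `(w_k)_r = 1`,
the determinant of `[w₁ ⋯ w_r]` equals `(−1)^{⌊r/2⌋} ∏_{j<i} (μ_i − μ_j)`. -/
theorem det_eigenvector_matrix_B2 (r : ℕ) (hr : 0 < r) :
    (Matrix.of fun j k : Fin r =>
        if (j : ℕ) = r - 1 then (1 : ℝ)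
        else 2 * Real.cos ((↑(r - 1 - (j : ℕ)) : ℝ) *
          ((2 * ((k : ℕ) + 1 : ℝ) - 1) * Real.pi / (2 * r)))).det =
      (-1) ^ (r / 2) *
        ∏ i : Fin r, ∏ j ∈ Finset.Iio i,
          (2 * Real.cos ((2 * ((i : ℕ) + 1 : ℝ) - 1) * Real.pi / (2 * r)) -
            2 * Real.cos ((2 * ((j : ℕ) + 1 : ℝ) - 1) * Real.pi / (2 * r))) := by
  set β : Fin r → ℝ := fun k => (2 * ((k : ℕ) + 1 : ℝ) - 1) * Real.pi / (2 * r) with hβ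
  set μ : Fin r → ℝ := fun k => 2 * Real.cos (β k) with hμ
  -- Step 1: rewrite entries as polynomial evaluations
  have hM : (Matrix.of fun j k : Fin r =>
        if (j : ℕ) = r - 1 then (1 : ℝ)
        else 2 * Real.cos ((↑(r - 1 - (j : ℕ)) : ℝ) * β k)) =
      Matrix.of fun j k : Fin r => (rP (r - 1 - (j : ℕ))).eval (μ k) := by
    ext j k
    by_cases h : (j : ℕ) = r - 1
    · simp [h, rP]
    · have hj := j.isLt
      have h1 : r - 1 - (j : ℕ) ≠ 0 := by omega
      simp only [of_apply, if_neg h, rP, if_neg h1, hμ, sP_eval (β k)]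
  -- Step 2: factorization M = C * V
  have hdeg : ∀ j : Fin r, (rP (r - 1 - (j : ℕ))).natDegree < r := by
    intro j; rw [rP_natDegree]; omega
  have hfac : (Matrix.of fun j k : Fin r => (rP (r - 1 - (j : ℕ))).eval (μ k)) =
      (Matrix.of fun j j' : Fin r => (rP (r - 1 - (j : ℕ))).coeff (r - 1 - (j' : ℕ))) *
      (Matrix.of fun j k : Fin r => μ k ^ (r - 1 - (j : ℕ))) := by
    ext j k
    rw [Matrix.mul_apply]
    simp only [of_apply]
    rw [eval_eq_sum_range' (hdeg j) (μ k), ← Fin.sum_univ_eq_sum_range]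
    refine (Fintype.sum_equiv Fin.revPerm _ _ ?_).symm
    intro j'
    have : ((Fin.revPerm j' : Fin r) : ℕ) = r - 1 - (j' : ℕ) := by
      simp [Fin.val_rev]; omega
    rw [this]
  -- Step 3: the coefficient matrix has determinant 1
  have hC : (Matrix.of fun j j' : Fin r =>
      (rP (r - 1 - (j : ℕ))).coeff (r - 1 - (j' : ℕ))).det = 1 := by
    rw [Matrix.det_of_upperTriangular]
    · refine Finset.prod_eq_one fun j _ => ?_
      have : (rP (r - 1 - (j : ℕ))).coeff (r - 1 - (j : ℕ)) = 1 := by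
        have h2 := (rP_monic (r - 1 - (j : ℕ))).coeff_natDegree
        rwa [rP_natDegree] at h2
      simpa using this
    · intro i j hji
      simp only [of_apply]
      apply coeff_eq_zero_of_natDegree_lt
      rw [rP_natDegree]
      have hi := i.isLt
      have hj := j.isLt
      have : (j : ℕ) < (i : ℕ) := hji
      omega
  -- Step 4: determinant of the power matrix via Vandermonde
  have hV : (Matrix.of fun j k : Fin r => μ k ^ (r - 1 - (j : ℕ))).det =
      (Matrix.vandermonde fun i => μ i.rev).det := by
    rw [← Matrix.det_transpose]
    have : (Matrix.of fun j k : Fin r => μ k ^ (r - 1 - (j : ℕ)))ᵀ =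
        (Matrix.vandermonde fun i => μ i.rev).submatrix Fin.revPerm Fin.revPerm := by
      ext i j
      simp only [Matrix.transpose_apply, Matrix.submatrix_apply, Matrix.vandermonde_apply,
        of_apply, Fin.revPerm_apply, Fin.rev_rev]
      congr 1
      rw [Fin.val_rev]; omega
    rw [this, Matrix.det_submatrix_equiv_self]
  rw [hM, hfac, Matrix.det_mul, hC, one_mul, hV, Matrix.det_vandermonde]
  rw [prod_Ioi_eq_prod_Iio (fun a b => μ b.rev - μ a.rev)]
  rw [prod_pairs_rev (fun a b => μ a - μ b)]
  have hneg : ∏ i : Fin r, ∏ j ∈ Finset.Iio i, (μ j - μ i) =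
      (-1 : ℝ) ^ (∑ i ∈ Finset.range r, i) * ∏ i : Fin r, ∏ j ∈ Finset.Iio i, (μ i - μ j) := by
    have : ∀ i : Fin r, ∏ j ∈ Finset.Iio i, (μ j - μ i) =
        (-1 : ℝ) ^ ((i : ℕ)) * ∏ j ∈ Finset.Iio i, (μ i - μ j) := by
      intro i
      rw [← Fin.card_Iio i, ← Finset.prod_const, ← Finset.prod_mul_distrib]
      exact Finset.prod_congr rfl fun j _ => by ring
    rw [Finset.prod_congr rfl fun i _ => this i, Finset.prod_mul_distrib,
      Finset.prod_pow_eq_pow_sum, ← Fin.sum_univ_eq_sum_range]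
  rw [hneg, neg_one_pow_gauss r hr]
end

section
/- Let n be a positive integer with adjacency matrix A of the Dynkin graph A_n, and for 1 ≤ i, j ≤ n let w_{i,j} = (A^{j−1}·e_n)_i denote the number of walks of length j−1 in A_n starting at vertex i. Then for every i with 2 ≤ i ≤ ⌈n/2⌉: (1) w_{i,j} = w_{i−1,j} for all 1 ≤ j ≤ i−1, and (2) w_{i,i} = w_{i−1,i} + 1. -/
open Matrix

/-- Number of walks of length `k` starting at `m` on the half-line path graph `ℕ`. -/
def hwalk : ℕ → ℕ → ℤ
  | 0, _ => 1
  | k+1, 0 => hwalk k 1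
  | k+1, m+1 => hwalk k m + hwalk k (m+2)

lemma hwalk_eq : ∀ k m : ℕ, k ≤ m → hwalk k (m+1) = hwalk k m := by
  intro k
  induction k with
  | zero => intro m _; rfl
  | succ k ih =>
    rintro (_ | m) hm
    · omega
    · show hwalk k (m+1) + hwalk k (m+3) = hwalk k m + hwalk k (m+2)
      rw [ih m (by omega), ih (m+2) (by omega)]

lemma hwalk_diag : ∀ m : ℕ, hwalk (m+1) (m+1) = hwalk (m+1) m + 1 := by
  intro m
  induction m with
  | zero => rfl
  | succ m ih =>
    show hwalk (m+1) (m+1) + hwalk (m+1) (m+3) = hwalk (m+1) m + hwalk (m+1) (m+2) + 1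
    rw [ih, hwalk_eq (m+1) (m+2) (by omega)]
    ring

lemma mulVec_path (n : ℕ) (v : Fin n → ℤ) (m : Fin n) :
    (pathAdj n *ᵥ v) m =
      (if h : (m : ℕ) + 1 < n then v ⟨(m : ℕ) + 1, h⟩ else 0) +
      (if h : 1 ≤ (m : ℕ) then v ⟨(m : ℕ) - 1, by omega⟩ else 0) := by
  unfold pathAdj
  show (∑ j : Fin n, (if (m : ℕ) + 1 = (j : ℕ) ∨ (j : ℕ) + 1 = (m : ℕ) then (1:ℤ) else 0) * v j) = _
  have : ∀ j : Fin n,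
      (if (m : ℕ) + 1 = (j : ℕ) ∨ (j : ℕ) + 1 = (m : ℕ) then (1:ℤ) else 0) * v j =
      (if (m : ℕ) + 1 = (j : ℕ) then v j else 0) +
      (if (j : ℕ) + 1 = (m : ℕ) then v j else 0) := by
    intro j
    by_cases h1 : (m : ℕ) + 1 = (j : ℕ) <;> by_cases h2 : (j : ℕ) + 1 = (m : ℕ) <;>
      simp [h1, h2] <;> omega
  rw [Finset.sum_congr rfl (fun j _ => this j), Finset.sum_add_distrib]
  congr 1
  · by_cases h : (m : ℕ) + 1 < n
    · rw [dif_pos h]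
      have : ∀ j : Fin n, ((m : ℕ) + 1 = (j : ℕ)) ↔ (j = ⟨(m : ℕ) + 1, h⟩) := by
        intro j; rw [Fin.ext_iff]; exact eq_comm
      rw [Finset.sum_congr rfl (fun j _ => by rw [if_congr (this j) rfl rfl])]
      simp
    · rw [dif_neg h]
      apply Finset.sum_eq_zero
      intro j _
      rw [if_neg]
      omega
  · by_cases h : 1 ≤ (m : ℕ)
    · rw [dif_pos h]
      have : ∀ j : Fin n, ((j : ℕ) + 1 = (m : ℕ)) ↔ (j = ⟨(m : ℕ) - 1, by omega⟩) := by
        intro j; rw [Fin.ext_iff]; simp; omega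
      rw [Finset.sum_congr rfl (fun j _ => by rw [if_congr (this j) rfl rfl])]
      simp
    · rw [dif_neg h]
      apply Finset.sum_eq_zero
      intro j _
      rw [if_neg]
      omega

lemma pow_mulVec_eq (n : ℕ) : ∀ (k : ℕ) (m : Fin n), (m : ℕ) + k ≤ n - 1 →
    (pathAdj n ^ k *ᵥ fun _ => (1 : ℤ)) m = hwalk k (m : ℕ) := by
  intro k
  induction k with
  | zero => intro m _; simp [hwalk]
  | succ k ih =>
    intro m hm
    have hn : 0 < n := m.pos
    rw [pow_succ', ← Matrix.mulVec_mulVec, mulVec_path]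
    have h1 : (m : ℕ) + 1 < n := by omega
    rw [dif_pos h1, ih ⟨(m : ℕ) + 1, h1⟩ (by simp; omega)]
    by_cases h2 : 1 ≤ (m : ℕ)
    · rw [dif_pos h2, ih ⟨(m : ℕ) - 1, by omega⟩ (by simp; omega)]
      obtain ⟨m', hm'⟩ : ∃ m', (m : ℕ) = m' + 1 := ⟨(m : ℕ) - 1, by omega⟩
      simp only [hm']
      show hwalk k (m' + 2) + hwalk k (m' + 1 - 1) = hwalk (k+1) (m' + 1)
      show hwalk k (m' + 2) + hwalk k m' = hwalk k m' + hwalk k (m' + 2)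
      ring
    · rw [dif_neg h2]
      have hm0 : (m : ℕ) = 0 := by omega
      simp only [hm0]
      show hwalk k 1 + 0 = hwalk (k+1) 0
      show hwalk k 1 + 0 = hwalk k 1
      ring

/-- With `w_{i,j} = (A^{j−1} e)_i` (1-indexed) the number of walks of length
`j−1` starting at vertex `i` in `A_n`, for every `2 ≤ i ≤ ⌈n/2⌉` one has
`w_{i,j} = w_{i−1,j}` for `1 ≤ j ≤ i−1` and `w_{i,i} = w_{i−1,i} + 1`. -/
theorem walk_count_rows (n : ℕ) (hn : 0 < n) (i : ℕ) (hi2 : 2 ≤ i)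
    (hir : i ≤ (n + 1) / 2) :
    (∀ j, 1 ≤ j → j ≤ i - 1 →
      (pathAdj n ^ (j - 1) *ᵥ fun _ => (1 : ℤ)) ⟨i - 1, by omega⟩ =
        (pathAdj n ^ (j - 1) *ᵥ fun _ => (1 : ℤ)) ⟨i - 2, by omega⟩) ∧
    (pathAdj n ^ (i - 1) *ᵥ fun _ => (1 : ℤ)) ⟨i - 1, by omega⟩ =
      (pathAdj n ^ (i - 1) *ᵥ fun _ => (1 : ℤ)) ⟨i - 2, by omega⟩ + 1 := by
  have hni : 2 * i ≤ n + 1 := by omega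
  constructor
  · intro j hj1 hj2
    rw [pow_mulVec_eq n (j-1) ⟨i-1, by omega⟩ (by simp; omega),
        pow_mulVec_eq n (j-1) ⟨i-2, by omega⟩ (by simp; omega)]
    show hwalk (j-1) (i-1) = hwalk (j-1) (i-2)
    have : i - 1 = (i - 2) + 1 := by omega
    rw [this]
    exact hwalk_eq (j-1) (i-2) (by omega)
  · rw [pow_mulVec_eq n (i-1) ⟨i-1, by omega⟩ (by simp; omega),
        pow_mulVec_eq n (i-1) ⟨i-2, by omega⟩ (by simp; omega)]
    show hwalk (i-1) (i-1) = hwalk (i-1) (i-2) + 1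
    have h1 : i - 1 = (i - 2) + 1 := by omega
    rw [h1]
    exact hwalk_diag (i-2)
end
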